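/- arXiv:1305.0868 — 9 statements merged into one kernel-verified Lean document; each statement's English description precedes it below -/
import Mathlib

section
/- Let F be a field, f, g ∈ F[x₁,…,xₖ] with g ≠ 0. Then g divides f in F[x₁,…,xₖ] if and only if for every i ∈ {1,…,k}, g divides f when both are viewed as univariate polynomials in xᵢ over the field F(x₁,…,x_{i-1},x_{i+1},…,xₖ) of rational functions in the remaining variables. -/
open MvPolynomial

/-- View a multivariate polynomial `f ∈ F[x₁,…,xₖ]` as a univariate polynomial in the
variable `xᵢ` with coefficients in the field `F(x_j : j ≠ i)` of rational functions in
the remaining variables. -/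
noncomputable def asUnivariateIn {F : Type*} [Field F] {k : ℕ} (i : Fin k)
    (f : MvPolynomial (Fin k) F) :
    Polynomial (FractionRing (MvPolynomial {j : Fin k // j ≠ i} F)) :=
  Polynomial.map (algebraMap (MvPolynomial {j : Fin k // j ≠ i} F)
      (FractionRing (MvPolynomial {j : Fin k // j ≠ i} F)))
    ((MvPolynomial.optionEquivLeft F {j : Fin k // j ≠ i})
      (MvPolynomial.rename (Equiv.optionSubtypeNe i).symm f))

/-!
In a UFD, `g ∣ f` as soon as every prime power `p ^ n ∣ g` divides `f`. A prime `p` of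
`F[x₁,…,xₖ]` is not a constant, so it involves some variable `xᵢ`; as a polynomial in `xᵢ`
over `F[x_j : j ≠ i]` it is then irreducible of positive degree, hence primitive, and so is
`p ^ n`. By Gauss's lemma, divisibility by the primitive polynomial `p ^ n` over the fraction field
`F(x_j : j ≠ i)` descends to `F[x_j : j ≠ i][xᵢ] ≃ F[x₁,…,xₖ]`.
-/

open Polynomial

namespace Polynomial

variable {R : Type*} [CommRing R] [IsGCDMonoid R]

theorem IsPrimitive.pow {p : R[X]} (hp : p.IsPrimitive) (n : ℕ) : (p ^ n).IsPrimitive := by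
  have := Classical.arbitrary (NormalizedGCDMonoid R)
  induction n with
  | zero => simp
  | succ n ih => simpa only [pow_succ] using ih.mul hp

theorem pow_dvd_of_map_pow_dvd_map [IsDomain R] {K : Type*} [Field K] [Algebra R K]
    [IsFractionRing R K] {p q : R[X]} (hp : Irreducible p) (hdeg : p.natDegree ≠ 0) (n : ℕ)
    (h : (p ^ n).map (algebraMap R K) ∣ q.map (algebraMap R K)) : p ^ n ∣ q :=
  ((hp.isPrimitive hdeg).pow n).dvd_of_fraction_map_dvd_fraction_map h

end Polynomial

namespace MvPolynomial

theorem vars_nonempty {F σ : Type*} [Field F] {p : MvPolynomial σ F} (h0 : p ≠ 0)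
    (hu : ¬IsUnit p) : p.vars.Nonempty := by
  rw [Finset.nonempty_iff_ne_empty, Ne, vars_eq_empty_iff_eq_C]
  intro hC
  rw [hC, Ne, C_eq_zero] at h0
  exact hu (hC ▸ (isUnit_iff_ne_zero.mpr h0).map C)

variable {R σ : Type*} [CommRing R] [DecidableEq σ]

noncomputable def univariateEquiv (i : σ) :
    MvPolynomial σ R ≃ₐ[R] (MvPolynomial {j // j ≠ i} R)[X] :=
  (renameEquiv R (Equiv.optionSubtypeNe i).symm).trans (optionEquivLeft R {j // j ≠ i})

theorem natDegree_univariateEquiv (i : σ) (p : MvPolynomial σ R) :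
    (univariateEquiv i p).natDegree = p.degreeOf i :=
  (degreeOf_eq_natDegree i p).symm

end MvPolynomial

theorem asUnivariateIn_eq_map {F : Type*} [Field F] {k : ℕ} (i : Fin k)
    (f : MvPolynomial (Fin k) F) :
    asUnivariateIn i f = (univariateEquiv i f).map (algebraMap _ _) :=
  rfl

theorem asUnivariateIn_dvd_asUnivariateIn {F : Type*} [Field F] {k : ℕ}
    {f g : MvPolynomial (Fin k) F} (h : g ∣ f) (i : Fin k) :
    asUnivariateIn i g ∣ asUnivariateIn i f := by
  simpa only [asUnivariateIn_eq_map] using Polynomial.map_dvd _ (map_dvd (univariateEquiv i) h)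

theorem pow_dvd_of_forall_asUnivariateIn_dvd {F : Type*} [Field F] {k : ℕ}
    {f g p : MvPolynomial (Fin k) F} (H : ∀ i, asUnivariateIn i g ∣ asUnivariateIn i f)
    (hp : Prime p) {n : ℕ} (hn : p ^ n ∣ g) : p ^ n ∣ f := by
  obtain ⟨i, hi⟩ := vars_nonempty hp.ne_zero hp.not_isUnit
  have hirr : Irreducible (univariateEquiv i p) :=
    (MulEquiv.irreducible_iff (univariateEquiv i)).mpr hp.irreducible
  have hdeg : (univariateEquiv i p).natDegree ≠ 0 := by
    rw [natDegree_univariateEquiv]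
    exact mem_vars_iff_degreeOf_ne_zero.mp hi
  have hmap := (asUnivariateIn_dvd_asUnivariateIn hn i).trans (H i)
  rw [asUnivariateIn_eq_map, asUnivariateIn_eq_map, map_pow] at hmap
  rw [← map_dvd_iff (univariateEquiv i), map_pow]
  exact pow_dvd_of_map_pow_dvd_map hirr hdeg n hmap

/-- For `f, g ∈ F[x₁,…,xₖ]` with `g ≠ 0`, `g` divides `f` in the
multivariate polynomial ring iff for every `i`, `g` divides `f` when both are viewed as
univariate polynomials in `xᵢ` over the field of rational functions in the other variables. -/
theorem dvd_iff_forall_dvd_asUnivariate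
    {F : Type*} [Field F] {k : ℕ} (f g : MvPolynomial (Fin k) F) (hg : g ≠ 0) :
    g ∣ f ↔ ∀ i : Fin k, asUnivariateIn i g ∣ asUnivariateIn i f := by
  refine ⟨asUnivariateIn_dvd_asUnivariateIn, fun H => ?_⟩
  rw [UniqueFactorizationMonoid.dvd_iff_emultiplicity_le hg]
  exact fun p hp => emultiplicity_le_emultiplicity_iff.mpr fun n hn =>
    pow_dvd_of_forall_asUnivariateIn_dvd H hp hn
end

section
/- Let F be a field and f, g ∈ F[x₁,…,xₖ] be nonzero polynomials. Then gcd(f, g) = 1 in F[x₁,…,xₖ] if and only if for every i ∈ {1,…,k}, the polynomials f and g, viewed as univariate polynomials in xᵢ over the field F(x_j : j ≠ i), have gcd equal to 1. -/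
open MvPolynomial

/-! A nonunit common divisor of `f` and `g` is nonconstant, so it has positive degree in some
variable `xᵢ` and stays a nonunit common divisor over `F(x_j : j ≠ i)`. Conversely, over the UFD
`F[x_j : j ≠ i]` every nonzero polynomial over the fraction field is associated to the image of a
primitive polynomial, and by Gauss's lemma a primitive polynomial dividing `f` and `g` over the
fraction field already divides them in `F[x₁,…,xₖ]`. -/

namespace Polynomial

open IsLocalization
open scoped nonZeroDivisors

variable {R K : Type*} [CommRing R] [IsDomain R] [IsGCDMonoid R] [Field K] [Algebra R K]
  [IsFractionRing R K]

theorem exists_isPrimitive_map_associated {d : K[X]} (hd : d ≠ 0) :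
    ∃ p : R[X], p.IsPrimitive ∧ Associated (p.map (algebraMap R K)) d := by
  let := Classical.arbitrary (NormalizedGCDMonoid R)
  set q := integerNormalization R⁰ d
  obtain ⟨b, hb, hq⟩ := integerNormalization_spec R⁰ d
  have hq0 : q ≠ 0 := fun h => hd (IsFractionRing.integerNormalization_eq_zero_iff.mp h)
  have hcontent : IsUnit (C (algebraMap R K q.content)) := by
    simpa using (IsFractionRing.injective R K).ne ((content_eq_zero_iff.not).mpr hq0)
  have hbC : IsUnit (C (algebraMap R K b)) := by
    simpa using (IsFractionRing.injective R K).ne (nonZeroDivisors.ne_zero hb)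
  refine ⟨q.primPart, q.isPrimitive_primPart, ?_⟩
  calc Associated (q.primPart.map (algebraMap R K)) (q.map (algebraMap R K)) := by
        conv_rhs => rw [q.eq_C_content_mul_primPart, Polynomial.map_mul, map_C]
        exact (associated_unit_mul_left _ _ hcontent).symm
    _ = C (algebraMap R K b) * d := by rw [hq, Algebra.smul_def, algebraMap_apply]
    Associated _ d := associated_unit_mul_left _ _ hbC

end Polynomial

theorem IsRelPrime.map_fraction_map {R K : Type*} [CommRing R] [IsDomain R] [IsGCDMonoid R]
    [Field K] [Algebra R K] [IsFractionRing R K] {p q : Polynomial R} (h : IsRelPrime p q) :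
    IsRelPrime (p.map (algebraMap R K)) (q.map (algebraMap R K)) := by
  intro d hdp hdq
  rcases eq_or_ne d 0 with rfl | hd
  · rw [zero_dvd_iff, Polynomial.map_eq_zero_iff (IsFractionRing.injective R K)] at hdp hdq
    subst hdp hdq
    exact absurd h not_isRelPrime_zero_zero
  obtain ⟨P, hP, hPd⟩ := Polynomial.exists_isPrimitive_map_associated (R := R) hd
  have hPp := hP.dvd_of_fraction_map_dvd_fraction_map (hPd.dvd.trans hdp)
  have hPq := hP.dvd_of_fraction_map_dvd_fraction_map (hPd.dvd.trans hdq)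
  exact hPd.isUnit_iff.mp ((h hPp hPq).map (Polynomial.mapRingHom (algebraMap R K)))

namespace MvPolynomial

theorem isUnit_of_forall_degreeOf_eq_zero {σ F : Type*} [Field F] {p : MvPolynomial σ F}
    (hp : p ≠ 0) (h : ∀ i, degreeOf i p = 0) : IsUnit p := by
  have hvars : p.vars = ∅ := Finset.eq_empty_of_forall_notMem fun i hi =>
    mem_vars_iff_degreeOf_ne_zero.mp hi (h i)
  rw [vars_eq_empty_iff_eq_C.mp hvars] at hp ⊢
  exact (isUnit_iff_ne_zero.mpr (C_ne_zero.mp hp)).map C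

end MvPolynomial

section asUnivariateIn

variable {F : Type*} [Field F] {k : ℕ}

theorem asUnivariateIn_dvd (i : Fin k) {d f : MvPolynomial (Fin k) F} (h : d ∣ f) :
    asUnivariateIn i d ∣ asUnivariateIn i f :=
  Polynomial.map_dvd _ (map_dvd _ (map_dvd _ h))

theorem natDegree_asUnivariateIn (i : Fin k) (f : MvPolynomial (Fin k) F) :
    (asUnivariateIn i f).natDegree = degreeOf i f := by
  rw [asUnivariateIn, Polynomial.natDegree_map_eq_of_injective (IsFractionRing.injective _ _),
    degreeOf_eq_natDegree]

theorem IsRelPrime.asUnivariateIn (i : Fin k) {f g : MvPolynomial (Fin k) F}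
    (h : IsRelPrime f g) : IsRelPrime (asUnivariateIn i f) (asUnivariateIn i g) := by
  let e := (renameEquiv F (Equiv.optionSubtypeNe i).symm).trans
    (optionEquivLeft F {j : Fin k // j ≠ i})
  exact IsRelPrime.map_fraction_map (p := e f) (q := e g) (.of_map e.symm (by simpa using h))

end asUnivariateIn

theorem relPrime_iff_forall_relPrime_asUnivariate_general
    {F : Type*} [Field F] {k : ℕ} (f g : MvPolynomial (Fin k) F)
    (hf : f ≠ 0) :
    (∀ d : MvPolynomial (Fin k) F, d ∣ f → d ∣ g → IsUnit d) ↔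
      ∀ i : Fin k,
        ∀ d : Polynomial (FractionRing (MvPolynomial {j : Fin k // j ≠ i} F)),
          d ∣ asUnivariateIn i f → d ∣ asUnivariateIn i g → IsUnit d := by
  refine ⟨fun h i => IsRelPrime.asUnivariateIn i (fun _ => h _), fun h d hdf hdg => ?_⟩
  refine isUnit_of_forall_degreeOf_eq_zero (ne_zero_of_dvd_ne_zero hf hdf) fun i => ?_
  rw [← natDegree_asUnivariateIn]
  exact Polynomial.natDegree_eq_zero_of_isUnit
    (h i _ (asUnivariateIn_dvd i hdf) (asUnivariateIn_dvd i hdg))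

/-- For nonzero `f, g ∈ F[x₁,…,xₖ]`, `gcd(f,g) = 1` (every common divisor
is a unit) iff for every `i`, the polynomials `f` and `g` viewed as univariate polynomials
in `xᵢ` over `F(x_j : j ≠ i)` have gcd equal to `1`. -/
theorem relPrime_iff_forall_relPrime_asUnivariate
    {F : Type*} [Field F] {k : ℕ} (f g : MvPolynomial (Fin k) F)
    (hf : f ≠ 0) (hg : g ≠ 0) :
    (∀ d : MvPolynomial (Fin k) F, d ∣ f → d ∣ g → IsUnit d) ↔
      ∀ i : Fin k,
        ∀ d : Polynomial (FractionRing (MvPolynomial {j : Fin k // j ≠ i} F)),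
          d ∣ asUnivariateIn i f → d ∣ asUnivariateIn i g → IsUnit d :=
  relPrime_iff_forall_relPrime_asUnivariate_general f g hf
end

section
/- Let Q(x₁,…,xₙ) be a nonzero multivariate polynomial of total degree d over a field F, let S ⊆ F be a finite nonempty set, and let r₁,…,rₙ be chosen independently and uniformly at random from S. Then the probability that Q(r₁,…,rₙ) = 0 is at most d/|S|. -/
open MvPolynomial Finset

theorem MvPolynomial.card_zeros_mul_card_le_totalDegree_mul_pow {R : Type*} [CommRing R]
    [IsDomain R] [DecidableEq R] {n : ℕ} {p : MvPolynomial (Fin n) R} (hp : p ≠ 0)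
    {S : Finset R} (hS : S.Nonempty) :
    #{r ∈ Fintype.piFinset fun _ ↦ S | eval r p = 0} * #S ≤ p.totalDegree * #S ^ n := by
  have hS₀ : (0 : ℚ≥0) < #S := by exact_mod_cast hS.card_pos
  have h := schwartz_zippel_totalDegree hp S
  rw [div_le_div_iff₀ (pow_pos hS₀ n) hS₀] at h
  exact_mod_cast h

/-- **Schwartz–Zippel.** Let `Q` be a nonzero multivariate polynomial of
total degree `d` over a field `F`, and `S ⊆ F` a finite nonempty set. Then the number of
tuples `r ∈ Sⁿ` with `Q(r) = 0` is at most `d·|S|^{n-1}`; equivalently, the probability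
that a uniformly random `r ∈ Sⁿ` is a zero of `Q` is at most `d/|S|`. -/
theorem schwartz_zippel
    {F : Type*} [Field F] [DecidableEq F] {n : ℕ}
    (Q : MvPolynomial (Fin n) F) (hQ : Q ≠ 0) (S : Finset F) (hS : S.Nonempty) :
    ((Fintype.piFinset fun _ : Fin n => S).filter
        (fun r : Fin n → F => MvPolynomial.eval r Q = 0)).card
      ≤ Q.totalDegree * S.card ^ (n - 1) := by
  refine Nat.le_of_mul_le_mul_right ?_ hS.card_pos
  calc _ ≤ Q.totalDegree * #S ^ n := card_zeros_mul_card_le_totalDegree_mul_pow hQ hS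
    -- `n - 1` truncates at `n = 0`, where this step is `1 ≤ #S`.
    _ ≤ Q.totalDegree * (#S ^ (n - 1) * #S) := by
      rw [← pow_succ]
      gcongr
      · exact hS.card_pos
      · omega
    _ = Q.totalDegree * #S ^ (n - 1) * #S := (mul_assoc ..).symm
end

section
/- Let F be a field, and let f₁(y),…,f_r(y) be rational functions in F(y₁,…,yₖ). Let y⁽¹⁾,…,y⁽ʳ⁾ be r disjoint copies of the variable vector y, and let H be the r×r matrix over the rational function field F(y⁽¹⁾,…,y⁽ʳ⁾) whose (j,i)-entry is f_i(y⁽ʲ⁾). Then det(H) ≠ 0 if and only if f₁,…,f_r are linearly independent over F. -/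
/-! Over the common denominator `D = ∏ denᵢ`, row `j` of `H` is the row `(gᵢ(y⁽ʲ⁾))ᵢ` of
polynomials `gᵢ = D fᵢ` divided by `D(y⁽ʲ⁾)`, so it suffices to treat the polynomial alternant
`(gᵢ(y⁽ʲ⁾))`. Expanding it along the last row gives `∑ᵢ cᵢ(y⁽¹⁾,…,y⁽ʳ⁻¹⁾) gᵢ(y⁽ʳ⁾)`; comparing
coefficients of the monomials in the first `r - 1` copies, `F`-linear independence of the `gᵢ`
forces every cofactor `cᵢ` to vanish, whereas the cofactor of `g_r` is, up to sign, the alternant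
of `g₁,…,g_{r-1}`, nonzero by induction. Conversely, an `F`-linear relation among the `gᵢ` is a
kernel vector of the alternant with constant entries. -/

open MvPolynomial

open Finset in
theorem map_div_map_eq_map_mul_prod_erase_div_map_prod {R K ι : Type*} [CommRing R] [Field K]
    [Fintype ι] [DecidableEq ι] {φ : R →+* K} (hφ : Function.Injective φ) (num den : ι → R)
    (hden : ∀ i, den i ≠ 0) (i : ι) :
    φ (num i) / φ (den i) = φ (num i * ∏ l ∈ univ.erase i, den l) / φ (∏ l, den l) := by
  have hrest : φ (∏ l ∈ univ.erase i, den l) ≠ 0 := by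
    rw [map_prod]
    exact prod_ne_zero_iff.2 fun l _ => (map_ne_zero_iff φ hφ).2 (hden l)
  rw [← mul_prod_erase univ den (mem_univ i), map_mul, map_mul, mul_div_mul_right _ _ hrest]

theorem Matrix.det_of_map_div_map_ne_zero_iff {B L n : Type*} [CommRing B] [Field L] [Fintype n]
    [DecidableEq n] {φ : B →+* L} (hφ : Function.Injective φ) (N : Matrix n n B) {d : n → B}
    (hd : ∀ j, d j ≠ 0) : (of fun j i => φ (N j i) / φ (d j)).det ≠ 0 ↔ N.det ≠ 0 := by
  have hscale :
      (of fun j i => φ (N j i) / φ (d j)) = of fun j i => (φ (d j))⁻¹ * φ.mapMatrix N j i := by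
    ext j i
    simp [div_eq_inv_mul]
  have hprod : ∏ j, (φ (d j))⁻¹ ≠ 0 :=
    Finset.prod_ne_zero_iff.2 fun j _ => inv_ne_zero ((map_ne_zero_iff φ hφ).2 (hd j))
  rw [hscale, det_mul_column, ← RingHom.map_det, mul_ne_zero_iff_left hprod, map_ne_zero_iff φ hφ]

namespace MvPolynomial

variable {R ι σ : Type*} [CommRing R]

theorem eq_zero_of_sum_C_mul_map_eq_zero [Fintype ι] {A τ : Type*} [CommRing A] [Algebra R A]
    {v : ι → A} (hv : LinearIndependent R v) (c : ι → MvPolynomial τ R)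
    (h : ∑ i, C (v i) * map (algebraMap R A) (c i) = 0) : c = 0 := by
  ext i m
  have hm : ∑ i, coeff m (c i) • v i = 0 := by
    simpa [coeff_sum, coeff_C_mul, coeff_map, Algebra.smul_def, mul_comm] using
      congrArg (coeff m) h
  exact Fintype.linearIndependent_iff.mp hv _ hm i

theorem eq_zero_of_sum_rename_mul_rename_eq_zero [Fintype ι] {τ υ : Type*} {u : τ → υ}
    {w : σ → υ} (huw : Function.Injective (Sum.elim u w)) {g : ι → MvPolynomial σ R}
    (hg : LinearIndependent R g) (c : ι → MvPolynomial τ R)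
    (h : ∑ i, rename u (c i) * rename w (g i) = 0) : c = 0 := by
  refine eq_zero_of_sum_C_mul_map_eq_zero hg c ?_
  have hsum : ∑ i, rename Sum.inr (g i) * rename Sum.inl (c i) = 0 := by
    apply rename_injective _ huw
    simp only [map_sum, map_mul, map_zero, rename_rename, Sum.elim_comp_inl, Sum.elim_comp_inr]
    simpa only [mul_comm] using h
  have hinl (p : MvPolynomial τ R) :
      sumAlgEquiv R τ σ (rename Sum.inl p) = map (algebraMap R (MvPolynomial σ R)) p :=
    DFunLike.congr_fun (sumAlgEquiv_comp_rename_inl R τ σ) p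
  have hinr (q : MvPolynomial σ R) : sumAlgEquiv R τ σ (rename Sum.inr q) = C q :=
    DFunLike.congr_fun (sumAlgEquiv_comp_rename_inr R τ σ) q
  simpa only [map_sum, map_mul, map_zero, hinl, hinr] using congrArg (sumAlgEquiv R τ σ) hsum

noncomputable def alternant (g : ι → MvPolynomial σ R) : Matrix ι ι (MvPolynomial (ι × σ) R) :=
  Matrix.of fun j i => rename (Prod.mk j) (g i)

theorem alternant_submatrix {κ : Type*} (g : ι → MvPolynomial σ R) (e h : κ → ι) :
    (alternant g).submatrix e h = (alternant (g ∘ h)).map (rename (Prod.map e id)) := by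
  ext j i
  simp only [alternant, Matrix.submatrix_apply, Matrix.map_apply, Matrix.of_apply,
    Function.comp_apply, rename_rename]
  rfl

theorem det_alternant_ne_zero [Nontrivial R] {r : ℕ} {g : Fin r → MvPolynomial σ R}
    (hg : LinearIndependent R g) : (alternant g).det ≠ 0 := by
  induction r with
  | zero => simp
  | succ r ih =>
    intro hdet
    set c : Fin (r + 1) → MvPolynomial (Fin r × σ) R :=
      fun i => (-1) ^ (r + i : ℕ) * (alternant (g ∘ i.succAbove)).det
    have hlaplace : (alternant g).det =
        ∑ i, rename (Prod.map Fin.castSucc id) (c i) * rename (Prod.mk (Fin.last r)) (g i) := by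
      have hminor (i : Fin (r + 1)) :
          ((alternant g).submatrix Fin.castSucc i.succAbove).det =
            rename (Prod.map Fin.castSucc id) (alternant (g ∘ i.succAbove)).det := by
        rw [alternant_submatrix, AlgHom.map_det]
        rfl
      rw [Matrix.det_succ_row _ (Fin.last r)]
      refine Finset.sum_congr rfl fun i _ => ?_
      simp only [c, Fin.succAbove_last, hminor, map_mul, map_pow, map_neg, map_one, Fin.val_last]
      simp only [alternant, Matrix.of_apply]
      ring
    have hinj : Function.Injective
        (Sum.elim (Prod.map Fin.castSucc id) (Prod.mk (Fin.last r) : σ → Fin (r + 1) × σ)) :=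
      (Fin.castSucc_injective r).prodMap Function.injective_id |>.sumElim
        (Prod.mk_right_injective _) fun a b h => (Fin.castSucc_lt_last a.1).ne (congrArg Prod.fst h)
    have hc := congrFun
      (eq_zero_of_sum_rename_mul_rename_eq_zero hinj hg c (hlaplace ▸ hdet)) (Fin.last r)
    simp only [c, Fin.succAbove_last, Pi.zero_apply] at hc
    exact ih (hg.comp _ (Fin.castSucc_injective r))
      (((isUnit_neg_one.pow _).mul_right_eq_zero).mp hc)

theorem linearIndependent_of_det_alternant_ne_zero [IsDomain R] [Fintype ι] [DecidableEq ι]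
    {g : ι → MvPolynomial σ R} (hdet : (alternant g).det ≠ 0) : LinearIndependent R g := by
  by_contra hg
  obtain ⟨a, ha, i, hi⟩ := Fintype.not_linearIndependent_iff.mp hg
  refine hdet (Matrix.exists_mulVec_eq_zero_iff.mp ⟨C ∘ a, fun h => hi ?_, ?_⟩)
  · simpa using congrFun h i
  · ext1 j
    have := congrArg (rename (Prod.mk j)) ha
    simpa [Matrix.mulVec, dotProduct, alternant, smul_eq_C_mul, mul_comm] using this

theorem det_alternant_ne_zero_iff [IsDomain R] {r : ℕ} {g : Fin r → MvPolynomial σ R} :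
    (alternant g).det ≠ 0 ↔ LinearIndependent R g :=
  ⟨linearIndependent_of_det_alternant_ne_zero, det_alternant_ne_zero⟩

end MvPolynomial

/-- Let `f₁,…,f_r ∈ F(y₁,…,yₖ)` be rational functions, written as
`f_i = num_i / den_i`. Let `H` be the `r×r` matrix over `F(y⁽¹⁾,…,y⁽ʳ⁾)` (rational
functions in `r` disjoint fresh copies of the variables) whose `(j,i)` entry is
`f_i(y⁽ʲ⁾)`, obtained by renaming the variables `y_l ↦ y_{(j,l)}` in `num_i, den_i`.
Then `det H ≠ 0` iff `f₁,…,f_r` are linearly independent over `F`. -/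
theorem det_ne_zero_iff_linearIndependent
    {F : Type*} [Field F] {k r : ℕ}
    (f : Fin r → FractionRing (MvPolynomial (Fin k) F))
    (num den : Fin r → MvPolynomial (Fin k) F)
    (hden : ∀ i, den i ≠ 0)
    (hf : ∀ i, f i =
      algebraMap (MvPolynomial (Fin k) F) (FractionRing (MvPolynomial (Fin k) F)) (num i) /
      algebraMap (MvPolynomial (Fin k) F) (FractionRing (MvPolynomial (Fin k) F)) (den i)) :
    (Matrix.det (Matrix.of fun j i : Fin r =>
        (algebraMap (MvPolynomial (Fin r × Fin k) F)
            (FractionRing (MvPolynomial (Fin r × Fin k) F))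
            (MvPolynomial.rename (fun l => (j, l)) (num i))) /
        (algebraMap (MvPolynomial (Fin r × Fin k) F)
            (FractionRing (MvPolynomial (Fin r × Fin k) F))
            (MvPolynomial.rename (fun l => (j, l)) (den i)))) ≠ 0)
      ↔ ∀ a : Fin r → F,
          (∑ i, algebraMap (MvPolynomial (Fin k) F) (FractionRing (MvPolynomial (Fin k) F))
              (MvPolynomial.C (a i)) * f i) = 0 → a = 0 := by
  classical
  set D := ∏ l, den l
  set g : Fin r → MvPolynomial (Fin k) F := fun i => num i * ∏ l ∈ Finset.univ.erase i, den l
  have hD : D ≠ 0 := Finset.prod_ne_zero_iff.2 fun i _ => hden i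
  have hentry (j i : Fin r) :
      algebraMap _ (FractionRing (MvPolynomial (Fin r × Fin k) F))
            (rename (fun l => (j, l)) (num i)) /
          algebraMap _ _ (rename (fun l => (j, l)) (den i)) =
        algebraMap _ _ (alternant g j i) / algebraMap _ _ (rename (Prod.mk j) D) :=
    map_div_map_eq_map_mul_prod_erase_div_map_prod
      (φ := (algebraMap _ _).comp (rename (Prod.mk j)).toRingHom)
      ((IsFractionRing.injective _ _).comp (rename_injective _ (Prod.mk_right_injective j)))
      num den hden i
  have hsum (a : Fin r → F) :
      ∑ i, algebraMap (MvPolynomial (Fin k) F) (FractionRing (MvPolynomial (Fin k) F)) (C (a i)) *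
          f i =
        algebraMap _ _ (∑ i, a i • g i) / algebraMap _ _ D := by
    rw [map_sum, Finset.sum_div]
    refine Finset.sum_congr rfl fun i _ => ?_
    rw [hf, map_div_map_eq_map_mul_prod_erase_div_map_prod (IsFractionRing.injective _ _) num den
      hden, smul_eq_C_mul, ← mul_div_assoc, ← map_mul]
  have hDK : algebraMap _ (FractionRing (MvPolynomial (Fin k) F)) D ≠ 0 :=
    (map_ne_zero_iff _ (IsFractionRing.injective _ _)).2 hD
  simp only [hentry, hsum, div_eq_zero_iff, hDK, or_false, IsFractionRing.to_map_eq_zero_iff]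
  rw [Matrix.det_of_map_div_map_ne_zero_iff (IsFractionRing.injective _ _) _
      fun j => (map_ne_zero_iff _ (rename_injective _ (Prod.mk_right_injective j))).2 hD,
    det_alternant_ne_zero_iff, Fintype.linearIndependent_iff]
  simp only [_root_.funext_iff, Pi.zero_apply]
end

section
/- Let K be a field and let C and D be (n+1)×n matrices over K, each of rank n. Then the solution space of the equation r(z)·(zC − D) = 0, where r(z) ranges over row vectors with entries in K(z), is a one-dimensional K(z)-subspace; moreover it is spanned by a vector of the form (1, z, z², …, zⁿ)·F for some (n+1)×(n+1) matrix F over K. -/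
/-!
Over `K(z)` the pencil `zC - D` keeps rank `n`: since `C` has rank `n`, some row `j` can be
deleted leaving an invertible `C₀`, and the corresponding `n × n` minor `det (zC₀ - D₀)` is a
polynomial with leading coefficient `det C₀ ≠ 0`. The left kernel therefore has dimension one,
and it is spanned by the vector of signed maximal minors of `zC - D`, which lies in the kernel by
Laplace expansion of `zC - D` with one column repeated. These minors are polynomials of degree
at most `n`, so their coefficients form the matrix `F`.
-/

open Polynomial Module

namespace Matrix

variable {R K : Type*} {n : ℕ}

section CommRing

variable [CommRing R]

def signedMaximalMinors (A : Matrix (Fin (n + 1)) (Fin n) R) : Fin (n + 1) → R :=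
  fun i => (-1) ^ (i : ℕ) * (A.submatrix i.succAbove id).det

theorem signedMaximalMinors_vecMul (A : Matrix (Fin (n + 1)) (Fin n) R) :
    signedMaximalMinors A ᵥ* A = 0 := by
  funext j
  -- Laplace expansion of `A` with column `j` prepended, a matrix with two equal columns
  let B : Matrix (Fin (n + 1)) (Fin (n + 1)) R := of fun i => Fin.cons (A i j) (A i)
  have hB : B.det = 0 := det_zero_of_column_eq (Fin.succ_ne_zero j).symm fun _ => rfl
  rw [det_succ_column_zero] at hB
  show ∑ i, signedMaximalMinors A i * A i j = 0
  refine (Finset.sum_congr rfl fun i _ => ?_).trans hB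
  change _ = _ * _ * (A.submatrix i.succAbove id).det
  simp only [signedMaximalMinors, B, of_apply, Fin.cons_zero]
  ring

theorem signedMaximalMinors_eq_zero_iff (A : Matrix (Fin (n + 1)) (Fin n) R) (i : Fin (n + 1)) :
    signedMaximalMinors A i = 0 ↔ (A.submatrix i.succAbove id).det = 0 :=
  (isUnit_neg_one.pow _).mul_right_eq_zero

theorem signedMaximalMinors_map {S : Type*} [CommRing S] (f : R →+* S)
    (A : Matrix (Fin (n + 1)) (Fin n) R) :
    signedMaximalMinors (A.map f) = fun i => f (signedMaximalMinors A i) := by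
  funext i
  simp [signedMaximalMinors, RingHom.map_det, submatrix_map]

theorem natDegree_signedMaximalMinors_X_smul_sub_le (A B : Matrix (Fin (n + 1)) (Fin n) R)
    (i : Fin (n + 1)) :
    (signedMaximalMinors ((X : R[X]) • A.map Polynomial.C - B.map Polynomial.C) i).natDegree
      ≤ n := by
  have hsub : ((X : R[X]) • A.map Polynomial.C - B.map Polynomial.C).submatrix i.succAbove id =
      (X : R[X]) • (A.submatrix i.succAbove id).map Polynomial.C +
        (-B.submatrix i.succAbove id).map Polynomial.C := by
    ext
    simp [sub_eq_add_neg]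
  have hdet := natDegree_det_X_add_C_le (A.submatrix i.succAbove id) (-B.submatrix i.succAbove id)
  rw [Fintype.card_fin, ← hsub] at hdet
  rcases neg_one_pow_eq_or R[X] i with h | h <;>
    simpa only [signedMaximalMinors, h, one_mul, neg_one_mul, natDegree_neg] using hdet

theorem det_X_smul_sub_ne_zero {m : Type*} [Fintype m] [DecidableEq m] {A : Matrix m m R}
    (hA : A.det ≠ 0) (B : Matrix m m R) :
    ((X : R[X]) • A.map Polynomial.C - B.map Polynomial.C).det ≠ 0 := by
  intro h
  apply hA
  have hneg : (-B).map Polynomial.C = -B.map Polynomial.C :=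
    Matrix.map_neg _ (map_neg Polynomial.C) B
  rw [← coeff_det_X_add_C_card A (-B), hneg, ← sub_eq_add_neg, h, coeff_zero]

end CommRing

section Field

variable [Field K]

theorem finrank_ker_vecMulLinear_add_rank {m l : Type*} [Fintype m] [Fintype l]
    (A : Matrix m l K) :
    finrank K (LinearMap.ker A.vecMulLinear) + A.rank = Fintype.card m := by
  rw [← rank_transpose, rank, mulVecLin_transpose, add_comm,
    LinearMap.finrank_range_add_finrank_ker, finrank_fintype_fun_eq_card]

theorem finrank_ker_vecMulLinear_eq_one {A : Matrix (Fin (n + 1)) (Fin n) K} (hA : A.rank = n) :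
    finrank K (LinearMap.ker A.vecMulLinear) = 1 := by
  have := finrank_ker_vecMulLinear_add_rank A
  rw [hA, Fintype.card_fin] at this
  omega

theorem exists_eq_smul_of_vecMul_eq_zero {A : Matrix (Fin (n + 1)) (Fin n) K} (hA : A.rank = n)
    {v w : Fin (n + 1) → K} (hw : w ≠ 0) (hw₀ : w ᵥ* A = 0) (hv₀ : v ᵥ* A = 0) :
    ∃ c : K, v = c • w := by
  let w' : LinearMap.ker A.vecMulLinear := ⟨w, hw₀⟩
  obtain ⟨c, hc⟩ := (finrank_eq_one_iff_of_nonzero' w' fun h => hw (congrArg Subtype.val h)).mp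
    (finrank_ker_vecMulLinear_eq_one hA) ⟨v, hv₀⟩
  exact ⟨c, (congrArg Subtype.val hc).symm⟩

theorem mulVec_injective_of_rank_eq {m : Type*} [Fintype m] {A : Matrix m (Fin n) K}
    (hA : A.rank = n) : Function.Injective A.mulVec := by
  have := LinearMap.finrank_range_add_finrank_ker A.mulVecLin
  rw [← rank, hA, finrank_fin_fun] at this
  have hker : finrank K (LinearMap.ker A.mulVecLin) = 0 := by omega
  exact LinearMap.ker_eq_bot.mp (Submodule.finrank_eq_zero.mp hker)

theorem det_submatrix_succAbove_ne_zero_of_vecMul_eq_zero {A : Matrix (Fin (n + 1)) (Fin n) K}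
    (hA : Function.Injective A.mulVec) {u : Fin (n + 1) → K} (hu : u ᵥ* A = 0)
    {j : Fin (n + 1)} (hj : u j ≠ 0) : (A.submatrix j.succAbove id).det ≠ 0 := by
  rw [← isUnit_iff_ne_zero, ← isUnit_iff_isUnit_det, ← mulVec_injective_iff_isUnit]
  change Function.Injective (mulVecLin _)
  rw [← LinearMap.ker_eq_bot, ker_mulVecLin_eq_bot_iff]
  intro a ha
  have hsupp : A *ᵥ a = Pi.single j ((A *ᵥ a) j) := by
    funext k
    rcases Fin.eq_self_or_eq_succAbove j k with rfl | ⟨i, rfl⟩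
    · simp
    · rw [Pi.single_eq_of_ne (Fin.succAbove_ne j i)]
      exact congrFun ha i
  have hj₀ : u j * (A *ᵥ a) j = 0 := by
    rw [← dotProduct_single, ← hsupp, dotProduct_mulVec, hu, zero_dotProduct]
  have hAa : A *ᵥ a = 0 := by
    rw [hsupp, (mul_eq_zero.mp hj₀).resolve_left hj, Pi.single_zero]
  exact hA (hAa.trans (mulVec_zero A).symm)

theorem rank_eq_iff_exists_det_submatrix_succAbove_ne_zero
    {A : Matrix (Fin (n + 1)) (Fin n) K} :
    A.rank = n ↔ ∃ j : Fin (n + 1), (A.submatrix j.succAbove id).det ≠ 0 := by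
  constructor
  · intro hA
    obtain ⟨⟨u, hu⟩, hne⟩ := finrank_pos_iff_exists_ne_zero.mp
      (finrank_ker_vecMulLinear_eq_one hA ▸ one_pos)
    obtain ⟨j, hj⟩ := Function.ne_iff.mp (by simpa using hne : u ≠ 0)
    exact ⟨j, det_submatrix_succAbove_ne_zero_of_vecMul_eq_zero
      (mulVec_injective_of_rank_eq hA) hu hj⟩
  · rintro ⟨j, hj⟩
    refine le_antisymm A.rank_le_width ?_
    simpa [rank_of_det_ne_zero hj] using rank_submatrix_le A j.succAbove id

end Field

end Matrix

theorem RatFunc.algebraMap_eq_sum_X_pow_mul_C {K : Type*} [Field K] {p : K[X]} {n : ℕ}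
    (hp : p.natDegree ≤ n) :
    algebraMap K[X] (RatFunc K) p =
      ∑ i : Fin (n + 1), RatFunc.X ^ (i : ℕ) * RatFunc.C (p.coeff i) := by
  rw [← aeval_X_left_eq_algebraMap, aeval_eq_sum_range' (Nat.lt_succ_of_le hp),
    ← Fin.sum_univ_eq_sum_range (fun i => p.coeff i • RatFunc.X ^ i)]
  simp [Algebra.smul_def, mul_comm]

open Matrix in
theorem left_kernel_one_dimensional_general
    {K : Type*} [Field K] (n : ℕ)
    (C D : Matrix (Fin (n + 1)) (Fin n) K)
    (hC : C.rank = n) :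
    ∃ (F : Matrix (Fin (n + 1)) (Fin (n + 1)) K) (r₀ : Fin (n + 1) → RatFunc K),
      (r₀ = fun j => ∑ i : Fin (n + 1), RatFunc.X ^ (i : ℕ) * RatFunc.C (F i j)) ∧
      r₀ ≠ 0 ∧
      Matrix.vecMul r₀
        (Matrix.of fun i j =>
          (RatFunc.X : RatFunc K) * RatFunc.C (C i j) - RatFunc.C (D i j)) = 0 ∧
      ∀ r : Fin (n + 1) → RatFunc K,
        Matrix.vecMul r
          (Matrix.of fun i j =>
            (RatFunc.X : RatFunc K) * RatFunc.C (C i j) - RatFunc.C (D i j)) = 0 →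
        ∃ c : RatFunc K, r = fun j => c * r₀ j := by
  let φ := algebraMap K[X] (RatFunc K)
  let P : Matrix (Fin (n + 1)) (Fin n) K[X] :=
    (X : K[X]) • C.map Polynomial.C - D.map Polynomial.C
  have hM : (of fun i j => RatFunc.X * RatFunc.C (C i j) - RatFunc.C (D i j)) = P.map φ := by
    ext
    simp [P, φ]
    ring
  obtain ⟨j, hj⟩ := rank_eq_iff_exists_det_submatrix_succAbove_ne_zero.mp hC
  have hMj : ((P.map φ).submatrix j.succAbove id).det ≠ 0 := by
    rw [submatrix_map, ← RingHom.mapMatrix_apply, ← RingHom.map_det,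
      map_ne_zero_iff _ (IsFractionRing.injective K[X] (RatFunc K))]
    exact det_X_smul_sub_ne_zero hj _
  have hne : signedMaximalMinors (P.map φ) ≠ 0 :=
    Function.ne_iff.mpr ⟨j, (signedMaximalMinors_eq_zero_iff _ _).not.mpr hMj⟩
  rw [hM]
  refine ⟨of fun i k => (signedMaximalMinors P k).coeff i, signedMaximalMinors (P.map φ), ?_,
    hne, signedMaximalMinors_vecMul _, fun r hr => ?_⟩
  · rw [signedMaximalMinors_map]
    funext k
    exact RatFunc.algebraMap_eq_sum_X_pow_mul_C
      (natDegree_signedMaximalMinors_X_smul_sub_le _ _ k)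
  · obtain ⟨c, rfl⟩ := exists_eq_smul_of_vecMul_eq_zero
      (rank_eq_iff_exists_det_submatrix_succAbove_ne_zero.mpr ⟨j, hMj⟩) hne
      (signedMaximalMinors_vecMul _) hr
    exact ⟨c, rfl⟩

/-- Let `C, D` be `(n+1)×n` matrices over a field `K`, each of rank `n`.
Then the left kernel of `zC − D` over `K(z)` — the space of row vectors `r(z)` with
`r(z)·(zC − D) = 0` — is a one-dimensional `K(z)`-subspace, spanned by a vector of the
form `(1, z, …, zⁿ)·F` for some `(n+1)×(n+1)` matrix `F` over `K`. -/
theorem left_kernel_one_dimensional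
    {K : Type*} [Field K] (n : ℕ)
    (C D : Matrix (Fin (n + 1)) (Fin n) K)
    (hC : C.rank = n) (hD : D.rank = n) :
    ∃ (F : Matrix (Fin (n + 1)) (Fin (n + 1)) K) (r₀ : Fin (n + 1) → RatFunc K),
      (r₀ = fun j => ∑ i : Fin (n + 1), RatFunc.X ^ (i : ℕ) * RatFunc.C (F i j)) ∧
      r₀ ≠ 0 ∧
      Matrix.vecMul r₀
        (Matrix.of fun i j =>
          (RatFunc.X : RatFunc K) * RatFunc.C (C i j) - RatFunc.C (D i j)) = 0 ∧
      ∀ r : Fin (n + 1) → RatFunc K,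
        Matrix.vecMul r
          (Matrix.of fun i j =>
            (RatFunc.X : RatFunc K) * RatFunc.C (C i j) - RatFunc.C (D i j)) = 0 →
        ∃ c : RatFunc K, r = fun j => c * r₀ j :=
  left_kernel_one_dimensional_general n C D hC
end

section
/- Let G = (V, E) be a finite directed acyclic graph with coding variables x_{e'e} for each pair of adjacent edges (e', e) (i.e., head(e') = tail(e)). For edges a, b define the transfer polynomial m_{ab}(x) = Σ_{P ∈ P_{ab}} Π of the coding variables along P, where P_{ab} is the set of directed paths from a to b. Fix distinct source edges σ_a, σ_p and distinct sink edges τ_b, τ_q, and a coding variable x_{ee'}. Then the coefficient of x_{ee'}² in m_{σ_a τ_b}(x)·m_{σ_p τ_q}(x) equals the coefficient of x_{ee'}² in m_{σ_a τ_q}(x)·m_{σ_p τ_b}(x). -/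
/-!
Write `x = x_{ee'}`. By acyclicity a path traverses `e` followed by `e'` at most once, and never
when it ends at `e` or starts at `e'`. Cutting the paths through `(e, e')` there gives
`m_{ab} = r_{ab} + x · m_{ae} · m_{e'b}`, where `r_{ab}` sums over the paths avoiding `(e, e')`,
and none of `r_{ab}`, `m_{ae}`, `m_{e'b}` involves `x`. So the part of `m_{σa τb} · m_{σp τq}`
of degree two in `x` is `x² · m_{σa e} m_{e' τb} m_{σp e} m_{e' τq}`, which is symmetric in
`τb` and `τq`.
-/

/-- Adjacency of edges in a network: edge `e'` can follow edge `e` in a path when the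
destination node of `e` is the source node of `e'`. -/
def EdgeAdj {V E : Type*} (src dst : E → V) (e e' : E) : Prop := dst e = src e'

/-- `l` is a directed path (a nonempty sequence of consecutively adjacent edges) from
edge `a` to edge `b`. -/
def IsEdgePath {V E : Type*} (src dst : E → V) (a b : E) (l : List E) : Prop :=
  l.Chain' (EdgeAdj src dst) ∧ l.head? = some a ∧ l.getLast? = some b

/-- The monomial `t_P(x)` of a path `P = (e₁,…,e_k)`: the product of the coding variables
`x_{eᵢeᵢ₊₁}` along the path. -/
noncomputable def pathMonomial {E : Type*} (F : Type*) [Field F] (l : List E) :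
    MvPolynomial (E × E) F :=
  ((l.zip l.tail).map fun p => (MvPolynomial.X p : MvPolynomial (E × E) F)).prod

/-- The transfer polynomial `m_{ab}(x) = Σ_{P ∈ P_{ab}} t_P(x)`, where `Paths a b` is the
(finite) set of directed paths from `a` to `b`. -/
noncomputable def transferPoly {E : Type*} (F : Type*) [Field F]
    (Paths : E → E → Finset (List E)) (a b : E) : MvPolynomial (E × E) F :=
  ∑ l ∈ Paths a b, pathMonomial F l

open List MvPolynomial

namespace MvPolynomial

variable {σ R : Type*} [CommSemiring R]

theorem coeff_X_pow_mul_eq_zero_of_notMem_vars {s : σ} {p : MvPolynomial σ R} (hs : s ∉ p.vars)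
    {k : ℕ} {m : σ →₀ ℕ} (hm : m s ≠ k) : coeff m (X s ^ k * p) = 0 := by
  classical
  rw [X_pow_eq_monomial, coeff_monomial_mul', one_mul]
  split_ifs with hle
  · refine notMem_support_iff.mp fun hmem => hs ((mem_vars_iff_mem_support s).mpr ⟨_, hmem, ?_⟩)
    have := Finsupp.single_le_iff.mp hle
    simp only [Finsupp.mem_support_iff, Finsupp.tsub_apply, Finsupp.single_eq_same]
    omega
  · rfl

theorem notMem_vars_mul [DecidableEq σ] {s : σ} {p q : MvPolynomial σ R} (hp : s ∉ p.vars)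
    (hq : s ∉ q.vars) : s ∉ (p * q).vars :=
  fun h => (Finset.mem_union.mp (vars_mul p q h)).elim hp hq

theorem coeff_add_X_mul_mul_add_X_mul {s : σ} {m : σ →₀ ℕ} (hm : m s = 2)
    {p₀ p₁ q₀ q₁ : MvPolynomial σ R} (hp₀ : s ∉ p₀.vars) (hp₁ : s ∉ p₁.vars)
    (hq₀ : s ∉ q₀.vars) (hq₁ : s ∉ q₁.vars) :
    coeff m ((p₀ + X s * p₁) * (q₀ + X s * q₁)) = coeff m (X s ^ 2 * (p₁ * q₁)) := by
  classical
  have expand : (p₀ + X s * p₁) * (q₀ + X s * q₁) =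
      X s ^ 0 * (p₀ * q₀) + X s ^ 1 * (p₀ * q₁ + p₁ * q₀) + X s ^ 2 * (p₁ * q₁) := by ring
  have h₁ : s ∉ (p₀ * q₁ + p₁ * q₀).vars := fun h =>
    (Finset.mem_union.mp (vars_add_subset _ _ h)).elim (notMem_vars_mul hp₀ hq₁)
      (notMem_vars_mul hp₁ hq₀)
  rw [expand, coeff_add, coeff_add,
    coeff_X_pow_mul_eq_zero_of_notMem_vars (notMem_vars_mul hp₀ hq₀) (by omega),
    coeff_X_pow_mul_eq_zero_of_notMem_vars h₁ (by omega), zero_add, zero_add]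

end MvPolynomial

theorem List.eq_of_append_cons_cons_eq {α : Type*} {x y : α} {C₁ C₂ D₁ D₂ : List α}
    (h₁ : ¬ [x, y] <:+: C₁ ++ [x]) (h₂ : ¬ [x, y] <:+: C₂ ++ [x])
    (h : C₁ ++ x :: y :: D₁ = C₂ ++ x :: y :: D₂) : C₁ = C₂ ∧ D₁ = D₂ := by
  -- a nonempty overlap `A` would put `[x, y]` inside the longer of the two prefixes
  have overlap : ∀ {C C' D D' : List α} {A : List α}, C' = C ++ A →
      x :: y :: D = A ++ x :: y :: D' → ¬ [x, y] <:+: C' ++ [x] → A = [] := by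
    intro C C' D D' A hC' hD hC
    by_contra hA
    have hpre : [x, y] <+: A ++ [x] := by
      refine prefix_of_prefix_length_le (l₃ := x :: y :: D) (prefix_append _ _) ?_ ?_
      · exact ⟨y :: D', by simp [hD]⟩
      · simpa [Nat.one_le_iff_ne_zero] using hA
    exact hC (hpre.isInfix.trans ⟨C, [], by simp [hC']⟩)
  rcases append_eq_append_iff.mp h with ⟨A, hC₂, hD⟩ | ⟨A, hC₁, hD⟩
  · obtain rfl := overlap hC₂ hD h₂
    simp only [append_nil, nil_append, cons.injEq] at hC₂ hD
    exact ⟨hC₂.symm, hD.2.2⟩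
  · obtain rfl := overlap hC₁ hD h₁
    simp only [append_nil, nil_append, cons.injEq] at hC₁ hD
    exact ⟨hC₁, hD.2.2.symm⟩

section Paths

variable {V E : Type*} {src dst : E → V}

theorem IsEdgePath.reflTransGen {a b : E} {l : List E} (hl : IsEdgePath src dst a b l) :
    Relation.ReflTransGen (EdgeAdj src dst) a b := by
  obtain ⟨hchain, hhead, hlast⟩ := hl
  obtain ⟨D, rfl⟩ := List.head?_eq_some_iff.mp hhead
  exact relationReflTransGen_of_exists_isChain_cons D hchain
    (by simpa [getLast?_eq_some_getLast] using hlast)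

theorem isEdgePath_append_cons_cons_iff {a b e e' : E} {C D : List E}
    (hadj : EdgeAdj src dst e e') :
    IsEdgePath src dst a b (C ++ e :: e' :: D) ↔
      IsEdgePath src dst a e (C ++ [e]) ∧ IsEdgePath src dst e' b (e' :: D) := by
  have : C ++ e :: e' :: D = (C ++ [e]) ++ (e' :: D) := by simp
  rw [this]
  show List.IsChain _ _ ∧ _ ↔ (List.IsChain _ _ ∧ _) ∧ List.IsChain _ _ ∧ _
  simp [List.isChain_append, hadj, and_assoc, and_left_comm]

theorem IsEdgePath.not_infix {a b e e' : E} {l : List E}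
    (hacyc : ∀ x : E, ¬ Relation.TransGen (EdgeAdj src dst) x x) (hadj : EdgeAdj src dst e e')
    (hl : IsEdgePath src dst a b l) (hab : a = e' ∨ b = e) : ¬ [e, e'] <:+: l := by
  rintro ⟨C, D, rfl⟩
  rw [append_assoc, cons_append, cons_append, nil_append,
    isEdgePath_append_cons_cons_iff hadj] at hl
  refine hacyc e (.head' hadj ?_)
  rcases hab with rfl | rfl
  · exact hl.1.reflTransGen
  · exact hl.2.reflTransGen

end Paths

section PathMonomial

variable {E : Type*} (F : Type*) [Field F]

@[simp]
theorem pathMonomial_nil : pathMonomial F ([] : List E) = 1 := rfl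

@[simp]
theorem pathMonomial_singleton (a : E) : pathMonomial F [a] = 1 := rfl

theorem pathMonomial_cons_cons (a b : E) (l : List E) :
    pathMonomial F (a :: b :: l) = X (a, b) * pathMonomial F (b :: l) := by
  simp [pathMonomial]

theorem pathMonomial_append_cons_cons (C D : List E) (x y : E) :
    pathMonomial F (C ++ x :: y :: D) =
      pathMonomial F (C ++ [x]) * X (x, y) * pathMonomial F (y :: D) := by
  induction C with
  | nil => simp [pathMonomial_cons_cons]
  | cons c C ih =>
    cases C with
    | nil => simp [pathMonomial_cons_cons, mul_assoc]
    | cons c' C => simp only [cons_append, pathMonomial_cons_cons] at ih ⊢; rw [ih]; ring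

theorem notMem_vars_pathMonomial {x y : E} :
    ∀ {l : List E}, ¬ [x, y] <:+: l → (x, y) ∉ (pathMonomial F l).vars
  | [], _ => by simp
  | [_], _ => by simp
  | a :: b :: l, h => by
    classical
    rw [pathMonomial_cons_cons]
    refine notMem_vars_mul ?_ (notMem_vars_pathMonomial fun h' => h (infix_cons h'))
    rw [vars_X, Finset.mem_singleton]
    rintro ⟨⟩
    exact h (prefix_append _ _).isInfix

end PathMonomial

noncomputable def transferPolyAvoiding {E : Type*} [DecidableEq E] (F : Type*) [Field F]
    (Paths : E → E → Finset (List E)) (e e' a b : E) : MvPolynomial (E × E) F :=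
  ∑ l ∈ Paths a b with ¬ [e, e'] <:+: l, pathMonomial F l

section TransferPoly

variable {V E : Type*} {src dst : E → V} (F : Type*) [Field F] {Paths : E → E → Finset (List E)}

theorem notMem_vars_sum_pathMonomial {x y : E} {s : Finset (List E)}
    (hs : ∀ l ∈ s, ¬ [x, y] <:+: l) : (x, y) ∉ (∑ l ∈ s, pathMonomial F l).vars := by
  classical
  intro h
  obtain ⟨l, hl, hmem⟩ := Finset.mem_biUnion.mp (vars_sum_subset _ _ h)
  exact notMem_vars_pathMonomial F (hs l hl) hmem

theorem notMem_vars_transferPolyAvoiding [DecidableEq E] (Paths : E → E → Finset (List E))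
    (e e' a b : E) :
    (e, e') ∉ (transferPolyAvoiding F Paths e e' a b).vars :=
  notMem_vars_sum_pathMonomial F fun _ hl => (Finset.mem_filter.mp hl).2

theorem notMem_vars_transferPoly_mul_transferPoly [DecidableEq E]
    (hPaths : ∀ a b l, l ∈ Paths a b ↔ IsEdgePath src dst a b l)
    (hacyc : ∀ x : E, ¬ Relation.TransGen (EdgeAdj src dst) x x)
    {e e' : E} (hadj : EdgeAdj src dst e e') (a b : E) :
    (e, e') ∉ (transferPoly F Paths a e * transferPoly F Paths e' b).vars :=
  notMem_vars_mul
    (notMem_vars_sum_pathMonomial F fun _ hl =>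
      ((hPaths _ _ _).mp hl).not_infix hacyc hadj (.inr rfl))
    (notMem_vars_sum_pathMonomial F fun _ hl =>
      ((hPaths _ _ _).mp hl).not_infix hacyc hadj (.inl rfl))

theorem transferPoly_eq_transferPolyAvoiding_add [DecidableEq E]
    (hPaths : ∀ a b l, l ∈ Paths a b ↔ IsEdgePath src dst a b l)
    (hacyc : ∀ x : E, ¬ Relation.TransGen (EdgeAdj src dst) x x)
    {e e' : E} (hadj : EdgeAdj src dst e e') (a b : E) :
    transferPoly F Paths a b = transferPolyAvoiding F Paths e e' a b +
      X (e, e') * (transferPoly F Paths a e * transferPoly F Paths e' b) := by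
  rw [transferPoly, ← Finset.sum_filter_not_add_sum_filter _ (fun l => [e, e'] <:+: l)]
  congr 1
  rw [transferPoly, transferPoly, Finset.sum_mul_sum, ← Finset.sum_product', Finset.mul_sum]
  have split : ∀ x ∈ Paths a e ×ˢ Paths e' b, ∃ C D, x = (C ++ [e], e' :: D) ∧
      IsEdgePath src dst a e (C ++ [e]) ∧ IsEdgePath src dst e' b (e' :: D) := by
    rintro ⟨A, B⟩ hAB
    rw [Finset.mem_product, hPaths, hPaths] at hAB
    obtain ⟨C, rfl⟩ := getLast?_eq_some_iff.mp hAB.1.2.2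
    obtain ⟨D, rfl⟩ := head?_eq_some_iff.mp hAB.2.2.1
    exact ⟨C, D, rfl, hAB⟩
  have join (C D : List E) : C ++ [e] ++ e' :: D = C ++ e :: e' :: D := by simp
  symm
  refine Finset.sum_bij (fun x _ => x.1 ++ x.2) ?_ ?_ ?_ ?_
  · intro x hx
    obtain ⟨C, D, rfl, hC, hD⟩ := split x hx
    rw [Finset.mem_filter, hPaths, join, isEdgePath_append_cons_cons_iff hadj]
    exact ⟨⟨hC, hD⟩, C, D, by simp⟩
  · intro x₁ hx₁ x₂ hx₂ h
    obtain ⟨C₁, D₁, rfl, hC₁, -⟩ := split x₁ hx₁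
    obtain ⟨C₂, D₂, rfl, hC₂, -⟩ := split x₂ hx₂
    obtain ⟨rfl, rfl⟩ := List.eq_of_append_cons_cons_eq (hC₁.not_infix hacyc hadj (.inr rfl))
      (hC₂.not_infix hacyc hadj (.inr rfl)) (by simpa only [join] using h)
    rfl
  · intro l hl
    rw [Finset.mem_filter, hPaths] at hl
    obtain ⟨hl, C, D, rfl⟩ := hl
    rw [show C ++ [e, e'] ++ D = C ++ e :: e' :: D by simp,
      isEdgePath_append_cons_cons_iff hadj] at hl
    exact ⟨(C ++ [e], e' :: D),
      Finset.mem_product.mpr ⟨(hPaths _ _ _).mpr hl.1, (hPaths _ _ _).mpr hl.2⟩, by simp⟩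
  · intro x hx
    obtain ⟨C, D, rfl, -, -⟩ := split x hx
    rw [join, pathMonomial_append_cons_cons]
    ring

end TransferPoly

theorem square_term_property_general
    {V E F : Type*} [Field F] (src dst : E → V)
    (hacyc : ∀ e : E, ¬ Relation.TransGen (EdgeAdj src dst) e e)
    (Paths : E → E → Finset (List E))
    (hPaths : ∀ a b l, l ∈ Paths a b ↔ IsEdgePath src dst a b l)
    (σa σp τb τq : E)
    (e e' : E) (hadj : EdgeAdj src dst e e')
    (m : (E × E) →₀ ℕ) (hm : m (e, e') = 2) :
    MvPolynomial.coeff m (transferPoly F Paths σa τb * transferPoly F Paths σp τq) =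
      MvPolynomial.coeff m (transferPoly F Paths σa τq * transferPoly F Paths σp τb) := by
  classical
  have avoid := notMem_vars_transferPolyAvoiding F Paths e e'
  have through := notMem_vars_transferPoly_mul_transferPoly F hPaths hacyc hadj
  have decompose := transferPoly_eq_transferPolyAvoiding_add F hPaths hacyc hadj
  rw [decompose σa τb, decompose σp τq, decompose σa τq, decompose σp τb,
    coeff_add_X_mul_mul_add_X_mul hm (avoid _ _) (through _ _) (avoid _ _) (through _ _),
    coeff_add_X_mul_mul_add_X_mul hm (avoid _ _) (through _ _) (avoid _ _) (through _ _)]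
  congr 2
  ring

/-- **Square-Term Property.** In a finite DAG, for distinct source edges
`σa ≠ σp`, distinct sink edges `τb ≠ τq` and a coding variable `x_{ee'}`, the coefficient
of `x_{ee'}²` in `m_{σaτb}·m_{σpτq}` equals the coefficient of `x_{ee'}²` in
`m_{σaτq}·m_{σpτb}` (coefficients of `x_{ee'}²` are compared monomial-by-monomial over
the remaining variables). -/
theorem square_term_property
    {V E F : Type*} [Fintype E] [Field F] (src dst : E → V)
    (hacyc : ∀ e : E, ¬ Relation.TransGen (EdgeAdj src dst) e e)
    (Paths : E → E → Finset (List E))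
    (hPaths : ∀ a b l, l ∈ Paths a b ↔ IsEdgePath src dst a b l)
    (σa σp τb τq : E) (hσ : σa ≠ σp) (hτ : τb ≠ τq)
    (e e' : E) (hadj : EdgeAdj src dst e e')
    (m : (E × E) →₀ ℕ) (hm : m (e, e') = 2) :
    MvPolynomial.coeff m (transferPoly F Paths σa τb * transferPoly F Paths σp τq) =
      MvPolynomial.coeff m (transferPoly F Paths σa τq * transferPoly F Paths σp τb) :=
  square_term_property_general src dst hacyc Paths hPaths σa σp τb τq e e' hadj m hm
end

section
/- In a directed acyclic graph with edge transfer polynomials m defined as sums of path monomials, for four edges σ_a, σ_p, τ_b, τ_q: m_{σ_a τ_b}(x)·m_{σ_p τ_q}(x) ≠ m_{σ_a τ_q}(x)·m_{σ_p τ_b}(x) (as polynomials) if and only if there exists an edge-disjoint pair of paths (P₁, P₂) with P₁ a path from σ_a to τ_b and P₂ a path from σ_p to τ_q, or an edge-disjoint pair (P₃, P₄) with P₃ from σ_a to τ_q and P₄ from σ_p to τ_b. -/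
/-!
Expand both products as sums of monomials `t_{P₁} t_{P₂}` over pairs of paths. If `P₁` and `P₂`
share an edge, exchanging their tails after the first edge of `P₁` lying on `P₂` gives a pair
with the other two endpoints and the same monomial; paths in a DAG repeat no edge, so this is an
involution, and the crossing pairs cancel in `m_{ab} m_{pq} - m_{aq} m_{pb}`. What remains is a
signed sum over edge-disjoint pairs. An edge-disjoint pair is determined by its monomial and its
two first edges (each path follows the unique successor recorded in the monomial until there is
none), so the monomial of a disjoint pair in `P_{ab} × P_{pq}` has coefficient `1` in the
difference, over any field.
-/

namespace List

variable {α : Type*}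

def adjacentPairs (l : List α) : Multiset (α × α) := ↑(l.zip l.tail)

@[simp] lemma adjacentPairs_nil : ([] : List α).adjacentPairs = 0 := rfl

@[simp] lemma adjacentPairs_singleton (a : α) : [a].adjacentPairs = 0 := rfl

@[simp] lemma adjacentPairs_cons_cons (a b : α) (l : List α) :
    (a :: b :: l).adjacentPairs = (a, b) ::ₘ (b :: l).adjacentPairs := rfl

lemma adjacentPairs_append_cons (u : List α) (e : α) (w : List α) :
    (u ++ e :: w).adjacentPairs = (u ++ [e]).adjacentPairs + (e :: w).adjacentPairs := by
  induction u with
  | nil => simp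
  | cons a u ih => cases u <;> simp_all

lemma map_fst_adjacentPairs : ∀ l : List α, l.adjacentPairs.map Prod.fst = ↑l.dropLast
  | [] | [_] => rfl
  | a :: b :: l => by simp [map_fst_adjacentPairs (b :: l)]

lemma isChain_iff_forall_mem_adjacentPairs {R : α → α → Prop} :
    ∀ {l : List α}, l.IsChain R ↔ ∀ p ∈ l.adjacentPairs, R p.1 p.2
  | [] | [_] => by simp
  | a :: b :: l => by simp [isChain_iff_forall_mem_adjacentPairs (l := b :: l)]

lemma eq_of_isChain_of_rightUnique {R : α → α → Prop} (hR : Relator.RightUnique R) :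
    ∀ {l l' : List α}, l.IsChain R → l'.IsChain R → l.head? = l'.head? →
      (∀ a ∈ l.getLast?, ∀ b, ¬ R a b) → (∀ a ∈ l'.getLast?, ∀ b, ¬ R a b) → l = l'
  | [], [], _, _, _, _, _ => rfl
  | [a], [_], _, _, hh, _, _ => by simpa using hh
  | [a], _ :: b :: _, _, h', hh, hl, _ => by
    obtain rfl : a = _ := by simpa using hh
    exact (hl a rfl b (isChain_cons_cons.1 h').1).elim
  | _ :: b :: _, [a], h, _, hh, _, hl' => by
    obtain rfl : _ = a := by simpa using hh
    exact (hl' _ rfl b (isChain_cons_cons.1 h).1).elim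
  | a :: b :: l, _ :: c :: l', h, h', hh, hl, hl' => by
    obtain rfl : a = _ := by simpa using hh
    obtain ⟨hab, h⟩ := isChain_cons_cons.1 h
    obtain ⟨hac, h'⟩ := isChain_cons_cons.1 h'
    obtain rfl := hR hab hac
    rw [eq_of_isChain_of_rightUnique hR h h' rfl (by simpa using hl) (by simpa using hl')]
  | [], _ :: _, _, _, hh, _, _ | _ :: _, [], _, _, hh, _, _ => by simp at hh

lemma exists_eq_append_cons_of_exists {p : α → Prop} [DecidablePred p] {l : List α}
    (h : ∃ x ∈ l, p x) : ∃ u e w, l = u ++ e :: w ∧ p e ∧ ∀ x ∈ u, ¬ p x := by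
  obtain ⟨e, hfind⟩ :=
    Option.ne_none_iff_exists'.1 (mt (find?_eq_none (p := (p ·))).1 (by simpa using h))
  obtain ⟨he, u, w, rfl, hu⟩ := find?_eq_some_iff_append.1 hfind
  exact ⟨u, e, w, rfl, by simpa using he, by simpa using hu⟩

lemma getLast_notMem_dropLast_append {l₁ l₂ : List α} (hl₁ : l₁.Nodup) (hl : l₁.Disjoint l₂) :
    ∀ a ∈ l₁.getLast?, a ∉ l₁.dropLast ++ l₂.dropLast := by
  intro a ha hmem
  rcases mem_append.1 hmem with h | h
  · rw [← dropLast_append_getLast? a ha] at hl₁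
    exact disjoint_of_nodup_append hl₁ h (mem_singleton_self a)
  · exact hl (mem_of_getLast? ha) (dropLast_subset _ h)

lemma eq_of_adjacentPairs_add_eq {l₁ l₂ m₁ m₂ : List α} (hl₁ : l₁.Nodup) (hl₂ : l₂.Nodup)
    (hl : l₁.Disjoint l₂) (hm₁ : m₁.Nodup) (hm : m₁.Disjoint m₂) (hhead : l₁.head? = m₁.head?)
    (hs : l₁.adjacentPairs + l₂.adjacentPairs = m₁.adjacentPairs + m₂.adjacentPairs) :
    l₁ = m₁ := by
  set M := l₁.adjacentPairs + l₂.adjacentPairs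
  have hfst : ∀ {k₁ k₂ : List α}, M = k₁.adjacentPairs + k₂.adjacentPairs →
      M.map Prod.fst = ↑(k₁.dropLast ++ k₂.dropLast) := fun h => by
    simp [h, map_fst_adjacentPairs]
  have hR : Relator.RightUnique fun a b => (a, b) ∈ M := fun a b c hb hc => by
    have hnodup : (M.map Prod.fst).Nodup := by
      rw [hfst rfl, Multiset.coe_nodup]
      exact ((dropLast_sublist _).append (dropLast_sublist _)).nodup (hl₁.append hl₂ hl)
    exact congrArg Prod.snd (Multiset.inj_on_of_nodup_map hnodup _ hb _ hc rfl)
  have hchain : ∀ {k₁ k₂ : List α}, M = k₁.adjacentPairs + k₂.adjacentPairs →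
      k₁.IsChain fun a b => (a, b) ∈ M := fun h =>
    isChain_iff_forall_mem_adjacentPairs.2 fun p hp => h ▸ Multiset.mem_add.2 (.inl hp)
  have hlast : ∀ {k₁ k₂ : List α}, k₁.Nodup → k₁.Disjoint k₂ →
      M = k₁.adjacentPairs + k₂.adjacentPairs → ∀ a ∈ k₁.getLast?, ∀ b, (a, b) ∉ M :=
    fun hk₁ hk h a ha b hab => getLast_notMem_dropLast_append hk₁ hk a ha <| by
      simpa [hfst h] using Multiset.mem_map_of_mem Prod.fst hab
  exact eq_of_isChain_of_rightUnique hR (hchain rfl) (hchain hs) hhead (hlast hl₁ hl rfl)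
    (hlast hm₁ hm hs)

section SwapTails

variable [DecidableEq α]

def swapTails : List α → List α → List α × List α
  | [], l₂ => ([], l₂)
  | e :: w, l₂ =>
    if e ∈ l₂ then (l₂.dropWhile (· ≠ e), l₂.takeWhile (· ≠ e) ++ e :: w)
    else (e :: (swapTails w l₂).1, (swapTails w l₂).2)

lemma swapTails_append_cons {u w u' w' : List α} {e : α} (hu : ∀ x ∈ u, x ∉ u' ++ e :: w')
    (he : e ∉ u') : swapTails (u ++ e :: w) (u' ++ e :: w') = (u ++ e :: w', u' ++ e :: w) := by
  induction u with
  | nil =>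
    have hu' : ∀ x ∈ u', (!decide (x = e)) = true := fun x hx => by
      simpa using fun h : x = e => he (h ▸ hx)
    simp [swapTails, dropWhile_append_of_pos hu', takeWhile_append_of_pos hu']
  | cons a u ih =>
    simp only [cons_append, swapTails, forall_mem_cons] at hu ⊢
    rw [if_neg hu.1, ih hu.2]

lemma exists_swapTails_eq {l₁ l₂ : List α} (h : ¬ l₁.Disjoint l₂) :
    ∃ u e w u' w', l₁ = u ++ e :: w ∧ l₂ = u' ++ e :: w' ∧ (∀ x ∈ u, x ∉ l₂) ∧ e ∉ u' ∧
      swapTails l₁ l₂ = (u ++ e :: w', u' ++ e :: w) := by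
  obtain ⟨u, e, w, rfl, he, hu⟩ :=
    exists_eq_append_cons_of_exists (by simpa [disjoint_left] using h : ∃ x ∈ l₁, x ∈ l₂)
  obtain ⟨u', _, w', rfl, rfl, hu'⟩ := exists_eq_append_cons_of_exists ⟨e, he, rfl⟩
  exact ⟨u, _, w, u', w', rfl, rfl, hu, fun h => hu' _ h rfl, swapTails_append_cons hu
    fun h => hu' _ h rfl⟩

variable {l₁ l₂ : List α}

lemma adjacentPairs_swapTails (h : ¬ l₁.Disjoint l₂) :
    (swapTails l₁ l₂).1.adjacentPairs + (swapTails l₁ l₂).2.adjacentPairs =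
      l₁.adjacentPairs + l₂.adjacentPairs := by
  obtain ⟨u, e, w, u', w', rfl, rfl, -, -, hs⟩ := exists_swapTails_eq h
  rw [hs, adjacentPairs_append_cons u e w', adjacentPairs_append_cons u' e w,
    adjacentPairs_append_cons u e w, adjacentPairs_append_cons u' e w']
  abel

lemma head?_swapTails (h : ¬ l₁.Disjoint l₂) :
    (swapTails l₁ l₂).1.head? = l₁.head? ∧ (swapTails l₁ l₂).2.head? = l₂.head? := by
  obtain ⟨u, e, w, u', w', rfl, rfl, -, -, hs⟩ := exists_swapTails_eq h
  rw [hs]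
  constructor <;> simp

lemma getLast?_swapTails (h : ¬ l₁.Disjoint l₂) :
    (swapTails l₁ l₂).1.getLast? = l₂.getLast? ∧ (swapTails l₁ l₂).2.getLast? = l₁.getLast? := by
  obtain ⟨u, e, w, u', w', rfl, rfl, -, -, hs⟩ := exists_swapTails_eq h
  rw [hs]
  constructor <;> simp [getLast?_cons]

lemma isChain_swapTails {R : α → α → Prop} (h : ¬ l₁.Disjoint l₂) (h₁ : l₁.IsChain R)
    (h₂ : l₂.IsChain R) : (swapTails l₁ l₂).1.IsChain R ∧ (swapTails l₁ l₂).2.IsChain R := by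
  rw [isChain_iff_forall_mem_adjacentPairs] at h₁ h₂
  have hR : ∀ p ∈ (swapTails l₁ l₂).1.adjacentPairs + (swapTails l₁ l₂).2.adjacentPairs,
      R p.1 p.2 := by
    rw [adjacentPairs_swapTails h]
    intro p hp
    exact (Multiset.mem_add.1 hp).elim (h₁ p) (h₂ p)
  simp only [isChain_iff_forall_mem_adjacentPairs]
  exact ⟨fun p hp => hR p (Multiset.mem_add.2 (.inl hp)),
    fun p hp => hR p (Multiset.mem_add.2 (.inr hp))⟩

lemma not_disjoint_swapTails (h : ¬ l₁.Disjoint l₂) :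
    ¬ (swapTails l₁ l₂).1.Disjoint (swapTails l₁ l₂).2 := by
  obtain ⟨u, e, w, u', w', rfl, rfl, -, -, hs⟩ := exists_swapTails_eq h
  rw [hs]
  exact fun hd => hd (a := e) (by simp) (by simp)

lemma swapTails_swapTails (h : ¬ l₁.Disjoint l₂) (hn : l₁.Nodup) :
    swapTails (swapTails l₁ l₂).1 (swapTails l₁ l₂).2 = (l₁, l₂) := by
  obtain ⟨u, e, w, u', w', rfl, rfl, hu, he, hs⟩ := exists_swapTails_eq h
  rw [hs, swapTails_append_cons _ he]
  intro x hx hx'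
  rcases mem_append.1 hx' with hx' | hx'
  · exact hu x hx (mem_append_left _ hx')
  · exact disjoint_of_nodup_append hn hx hx'

end SwapTails

end List

open MvPolynomial Finset

namespace MvPolynomial

lemma list_prod_map_X_eq_monomial {R σ : Type*} [CommSemiring R] [DecidableEq σ] (L : List σ) :
    (L.map fun i => (X i : MvPolynomial σ R)).prod = monomial (Multiset.toFinsupp ↑L) 1 := by
  induction L with
  | nil => simp
  | cons i L ih =>
    rw [List.map_cons, List.prod_cons, ih, ← Multiset.cons_coe, ← Multiset.singleton_add,
      Multiset.toFinsupp_add, Multiset.toFinsupp_singleton, monomial_single_add, pow_one]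

lemma coeff_sum_monomial_one {R σ ι : Type*} [CommSemiring R] [DecidableEq σ] (s : Finset ι)
    (k : ι → σ →₀ ℕ) (d : σ →₀ ℕ) :
    coeff d (∑ i ∈ s, monomial (k i) (1 : R)) = #{i ∈ s | k i = d} := by
  simp_rw [coeff_sum, coeff_monomial]
  exact Finset.sum_boole _ _

end MvPolynomial

section Network

variable {V E : Type*} {src dst : E → V}

lemma IsEdgePath.nodup (hacyc : ∀ e : E, ¬ Relation.TransGen (EdgeAdj src dst) e e)
    {a b : E} {l : List E} (hl : IsEdgePath src dst a b l) : l.Nodup := by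
  refine (List.isChain_iff_pairwise.1 (hl.1.imp fun _ _ => Relation.TransGen.single)).imp ?_
  rintro e _ h rfl
  exact hacyc e h

lemma IsEdgePath.mem_last {a b : E} {l : List E} (hl : IsEdgePath src dst a b l) : b ∈ l :=
  List.mem_of_getLast? hl.2.2

variable [DecidableEq E]

lemma IsEdgePath.swapTails {a b p q : E} {l₁ l₂ : List E} (h₁ : IsEdgePath src dst a b l₁)
    (h₂ : IsEdgePath src dst p q l₂) (h : ¬ l₁.Disjoint l₂) :
    IsEdgePath src dst a q (l₁.swapTails l₂).1 ∧ IsEdgePath src dst p b (l₁.swapTails l₂).2 := by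
  obtain ⟨hc₁, hc₂⟩ := List.isChain_swapTails h h₁.1 h₂.1
  obtain ⟨hh₁, hh₂⟩ := List.head?_swapTails h
  obtain ⟨hl₁, hl₂⟩ := List.getLast?_swapTails h
  exact ⟨⟨hc₁, hh₁ ▸ h₁.2.1, hl₁ ▸ h₂.2.2⟩, ⟨hc₂, hh₂ ▸ h₂.2.1, hl₂ ▸ h₁.2.2⟩⟩

end Network

section PathPairs

variable {α : Type*}

open Classical in
noncomputable def disjointPairs (S T : Finset (List α)) : Finset (List α × List α) :=
  {x ∈ S ×ˢ T | x.1.Disjoint x.2}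

open Classical in
noncomputable def crossingPairs (S T : Finset (List α)) : Finset (List α × List α) :=
  {x ∈ S ×ˢ T | ¬ x.1.Disjoint x.2}

variable {S T : Finset (List α)} {x : List α × List α}

@[simp] lemma mem_disjointPairs :
    x ∈ disjointPairs S T ↔ x.1 ∈ S ∧ x.2 ∈ T ∧ x.1.Disjoint x.2 := by
  simp [disjointPairs, and_assoc]

@[simp] lemma mem_crossingPairs :
    x ∈ crossingPairs S T ↔ x.1 ∈ S ∧ x.2 ∈ T ∧ ¬ x.1.Disjoint x.2 := by
  simp [crossingPairs, and_assoc]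

lemma disjointPairs_eq_empty :
    disjointPairs S T = ∅ ↔ ∀ l₁ ∈ S, ∀ l₂ ∈ T, ¬ l₁.Disjoint l₂ := by
  simp only [Finset.eq_empty_iff_forall_notMem, mem_disjointPairs, Prod.forall, not_and]
  exact ⟨fun h l₁ h₁ l₂ h₂ => h l₁ l₂ h₁ h₂, fun h l₁ l₂ h₁ h₂ => h l₁ h₁ l₂ h₂⟩

lemma sum_disjointPairs_add_sum_crossingPairs {M : Type*} [AddCommMonoid M]
    (f : List α × List α → M) :
    ∑ x ∈ disjointPairs S T, f x + ∑ x ∈ crossingPairs S T, f x = ∑ x ∈ S ×ˢ T, f x := by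
  classical
  exact Finset.sum_filter_add_sum_filter_not _ _ _

end PathPairs

section TransferPoly

variable {V E F : Type*} [Field F] {src dst : E → V} {Paths : E → E → Finset (List E)}
  [DecidableEq E]

noncomputable def pairExponent (x : List E × List E) : (E × E) →₀ ℕ :=
  Multiset.toFinsupp (x.1.adjacentPairs + x.2.adjacentPairs)

lemma pathMonomial_eq_monomial (l : List E) :
    pathMonomial F l = monomial (Multiset.toFinsupp l.adjacentPairs) 1 :=
  list_prod_map_X_eq_monomial _

lemma transferPoly_mul_transferPoly (a b p q : E) :
    transferPoly F Paths a b * transferPoly F Paths p q =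
      ∑ x ∈ Paths a b ×ˢ Paths p q, monomial (pairExponent x) 1 := by
  simp_rw [transferPoly, Finset.sum_mul_sum, ← Finset.sum_product', pathMonomial_eq_monomial,
    monomial_mul, one_mul, pairExponent, Multiset.toFinsupp_add]

variable (hacyc : ∀ e : E, ¬ Relation.TransGen (EdgeAdj src dst) e e)
  (hPaths : ∀ a b l, l ∈ Paths a b ↔ IsEdgePath src dst a b l)
include hPaths

lemma swapTails_mem_crossingPairs {a b p q : E} {x : List E × List E}
    (hx : x ∈ crossingPairs (Paths a b) (Paths p q)) :
    x.1.swapTails x.2 ∈ crossingPairs (Paths a q) (Paths p b) := by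
  simp only [mem_crossingPairs, hPaths] at hx ⊢
  obtain ⟨h₁, h₂, h⟩ := hx
  exact ⟨(h₁.swapTails h₂ h).1, (h₁.swapTails h₂ h).2, List.not_disjoint_swapTails h⟩

include hacyc

lemma sum_crossingPairs_comm {M : Type*} [AddCommMonoid M] (g : ((E × E) →₀ ℕ) → M)
    (a b p q : E) :
    ∑ x ∈ crossingPairs (Paths a b) (Paths p q), g (pairExponent x) =
      ∑ x ∈ crossingPairs (Paths a q) (Paths p b), g (pairExponent x) := by
  have hinv : ∀ {a b p q : E}, ∀ x ∈ crossingPairs (Paths a b) (Paths p q),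
      (x.1.swapTails x.2).1.swapTails (x.1.swapTails x.2).2 = x := fun x hx => by
    obtain ⟨h₁, -, h⟩ := mem_crossingPairs.1 hx
    exact List.swapTails_swapTails h (((hPaths _ _ _).1 h₁).nodup hacyc)
  refine Finset.sum_nbij' (fun x => x.1.swapTails x.2) (fun x => x.1.swapTails x.2)
    (fun x => swapTails_mem_crossingPairs hPaths) (fun x => swapTails_mem_crossingPairs hPaths)
    hinv hinv fun x hx => ?_
  rw [pairExponent, pairExponent, List.adjacentPairs_swapTails (mem_crossingPairs.1 hx).2.2]

lemma transferPoly_mul_sub_mul (a b p q : E) :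
    transferPoly F Paths a b * transferPoly F Paths p q -
        transferPoly F Paths a q * transferPoly F Paths p b =
      ∑ x ∈ disjointPairs (Paths a b) (Paths p q), monomial (pairExponent x) 1 -
        ∑ x ∈ disjointPairs (Paths a q) (Paths p b), monomial (pairExponent x) 1 := by
  rw [transferPoly_mul_transferPoly, transferPoly_mul_transferPoly,
    ← sum_disjointPairs_add_sum_crossingPairs, ← sum_disjointPairs_add_sum_crossingPairs,
    sum_crossingPairs_comm hacyc hPaths fun d => monomial d 1, add_sub_add_right_eq_sub]

lemma eq_of_pairExponent_eq {a b c p q r : E} {x y : List E × List E}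
    (hx : x ∈ disjointPairs (Paths a b) (Paths p q))
    (hy : y ∈ disjointPairs (Paths a c) (Paths p r)) (h : pairExponent x = pairExponent y) :
    x = y := by
  simp only [mem_disjointPairs, hPaths] at hx hy
  obtain ⟨hx₁, hx₂, hx⟩ := hx
  obtain ⟨hy₁, hy₂, hy⟩ := hy
  have hs := Multiset.toFinsupp.injective h
  refine Prod.ext ?_ ?_
  · exact List.eq_of_adjacentPairs_add_eq (hx₁.nodup hacyc) (hx₂.nodup hacyc) hx
      (hy₁.nodup hacyc) hy (hx₁.2.1.trans hy₁.2.1.symm) hs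
  · rw [add_comm, add_comm y.1.adjacentPairs] at hs
    exact List.eq_of_adjacentPairs_add_eq (hx₂.nodup hacyc) (hx₁.nodup hacyc) hx.symm
      (hy₂.nodup hacyc) hy.symm (hx₂.2.1.trans hy₂.2.1.symm) hs

lemma transferPoly_mul_ne_of_disjoint {a b p q : E} {P₁ P₂ : List E} (hP₁ : P₁ ∈ Paths a b)
    (hP₂ : P₂ ∈ Paths p q) (hd : P₁.Disjoint P₂) :
    transferPoly F Paths a b * transferPoly F Paths p q ≠
      transferPoly F Paths a q * transferPoly F Paths p b := by
  set d := pairExponent (P₁, P₂)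
  have hmem : (P₁, P₂) ∈ disjointPairs (Paths a b) (Paths p q) :=
    mem_disjointPairs.2 ⟨hP₁, hP₂, hd⟩
  have hA : {x ∈ disjointPairs (Paths a b) (Paths p q) | pairExponent x = d} = {(P₁, P₂)} :=
    Finset.eq_singleton_iff_unique_mem.2 ⟨Finset.mem_filter.2 ⟨hmem, rfl⟩, fun x hx =>
      (eq_of_pairExponent_eq hacyc hPaths hmem (Finset.mem_filter.1 hx).1
        (Finset.mem_filter.1 hx).2.symm).symm⟩
  have hB : {x ∈ disjointPairs (Paths a q) (Paths p b) | pairExponent x = d} = ∅ := by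
    refine Finset.filter_eq_empty_iff.2 fun y hy hyd => ?_
    obtain rfl := eq_of_pairExponent_eq hacyc hPaths hmem hy hyd.symm
    -- now `P₁ ∈ Paths a q` ends at `q`, which is also the last edge of `P₂`
    exact hd ((hPaths _ _ _).1 (mem_disjointPairs.1 hy).1).mem_last
      ((hPaths _ _ _).1 hP₂).mem_last
  intro h
  have := congrArg (coeff d) (transferPoly_mul_sub_mul hacyc hPaths (F := F) a b p q)
  rw [h, sub_self, coeff_sub, coeff_sum_monomial_one, coeff_sum_monomial_one, hA, hB] at this
  simp at this

end TransferPoly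

theorem transfer_product_ne_iff_disjoint_paths_general
    {V E F : Type*} [Field F] (src dst : E → V)
    (hacyc : ∀ e : E, ¬ Relation.TransGen (EdgeAdj src dst) e e)
    (Paths : E → E → Finset (List E))
    (hPaths : ∀ a b l, l ∈ Paths a b ↔ IsEdgePath src dst a b l)
    (σa σp τb τq : E) :
    (transferPoly F Paths σa τb * transferPoly F Paths σp τq ≠
        transferPoly F Paths σa τq * transferPoly F Paths σp τb) ↔
      ((∃ P₁ ∈ Paths σa τb, ∃ P₂ ∈ Paths σp τq, P₁.Disjoint P₂) ∨
        (∃ P₃ ∈ Paths σa τq, ∃ P₄ ∈ Paths σp τb, P₃.Disjoint P₄)) := by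
  classical
  constructor
  · contrapose!
    rintro ⟨hA, hB⟩
    rw [← sub_eq_zero, transferPoly_mul_sub_mul hacyc hPaths,
      disjointPairs_eq_empty.2 hA, disjointPairs_eq_empty.2 hB, sub_self]
  · rintro (⟨P₁, h₁, P₂, h₂, hd⟩ | ⟨P₃, h₃, P₄, h₄, hd⟩)
    · exact transferPoly_mul_ne_of_disjoint hacyc hPaths h₁ h₂ hd
    · exact (transferPoly_mul_ne_of_disjoint hacyc hPaths h₃ h₄ hd).symm

/-- In a finite DAG, `m_{σaτb}·m_{σpτq} ≠ m_{σaτq}·m_{σpτb}` (as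
polynomials) iff there is an edge-disjoint pair of paths `(P₁, P₂) ∈ P_{σaτb} × P_{σpτq}`
or an edge-disjoint pair `(P₃, P₄) ∈ P_{σaτq} × P_{σpτb}`. -/
theorem transfer_product_ne_iff_disjoint_paths
    {V E F : Type*} [Fintype E] [Field F] (src dst : E → V)
    (hacyc : ∀ e : E, ¬ Relation.TransGen (EdgeAdj src dst) e e)
    (Paths : E → E → Finset (List E))
    (hPaths : ∀ a b l, l ∈ Paths a b ↔ IsEdgePath src dst a b l)
    (σa σp τb τq : E) :
    (transferPoly F Paths σa τb * transferPoly F Paths σp τq ≠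
        transferPoly F Paths σa τq * transferPoly F Paths σp τb) ↔
      ((∃ P₁ ∈ Paths σa τb, ∃ P₂ ∈ Paths σp τq, P₁.Disjoint P₂) ∨
        (∃ P₃ ∈ Paths σa τq, ∃ P₄ ∈ Paths σp τb, P₃.Disjoint P₄)) :=
  transfer_product_ne_iff_disjoint_paths_general src dst hacyc Paths hPaths σa σp τb τq
end

section
/- Let η = s(x)/t(x) be a nonconstant rational function and p = u(x)/v(x) a rational function, both over a field F with gcd(s,t) = 1 and gcd(u,v) = 1, such that every variable has degree at most 1 in each of s, t and degree at most 2 in each of u, v. Suppose p = f(η)/g(η) for nonzero polynomials f, g ∈ F[z] with gcd(f, g) = 1, and suppose there is a variable x₀ and an assignment of values to all other variables under which (u, v) becomes (c₁x₀ + c₀, c₂) or (c₂, c₁x₀ + c₀) with c₁c₂ ≠ 0. Then max(deg f, deg g) = 1. -/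
/-!
Write `H_p(a, b) = ∑ pᵢ aⁱ b^(d-i)` for the degree-`d` homogenisation of `p` evaluated at `(a, b)`.
Homogenising a Bézout identity for `f, g` gives `A H_f(s,t) + B H_g(s,t) = t^N`, while
`H_p(s,t) ≡ p_d s^d` modulo `t`; as `s, t` are coprime, so are `H_f(s,t)` and `H_g(s,t)`.
Since `u, v` are coprime too, `u H_g(s,t) = v H_f(s,t)` forces `u ~ H_f(s,t)` and `v ~ H_g(s,t)`.

The partial assignment turns `s, t` into polynomials `σ, τ` of degree `≤ 1` in `x₀`, so
`H_f(σ,τ)` and `H_g(σ,τ)` have degree `≤ d`, with `x₀^d`-coefficients `H_f(σ₁,τ₁)`, `H_g(σ₁,τ₁)`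
for the leading coefficients `σ₁, τ₁`. These cannot both vanish unless `σ₁ = τ₁ = 0`, since
`f, g` have no common root, not even at infinity; and then both `H_f(σ,τ)`, `H_g(σ,τ)` are
constant. As one of them has degree `1` and the other degree `0`, `d = 1`.
-/

open Polynomial

namespace Polynomial

section CommSemiring

variable {R A : Type*} [CommSemiring R] [CommSemiring A] [Algebra R A]

lemma aeval_homogenize_eq_sum (p : R[X]) (n : ℕ) (a b : A) :
    MvPolynomial.aeval ![a, b] (p.homogenize n) =
      ∑ i ∈ Finset.range (n + 1), algebraMap R A (p.coeff i) * a ^ i * b ^ (n - i) := by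
  simp only [homogenize, map_sum, MvPolynomial.aeval_monomial,
    Finset.Nat.sum_antidiagonal_eq_sum_range_succ_mk]
  refine Finset.sum_congr rfl fun i _ ↦ ?_
  rw [Finsupp.update_eq_add_single (by simp),
    Finsupp.prod_add_index' (by simp) (by simp [pow_add]), Finsupp.prod_single_index (by simp),
    Finsupp.prod_single_index (by simp)]
  simp [mul_assoc]

lemma aeval_homogenize_zero_right (p : R[X]) (n : ℕ) (a : A) :
    MvPolynomial.aeval ![a, 0] (p.homogenize n) = algebraMap R A (p.coeff n) * a ^ n := by
  rw [aeval_homogenize_eq_sum, Finset.sum_range_succ, Finset.sum_eq_zero, zero_add,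
    Nat.sub_self, pow_zero, mul_one]
  intro i hi
  rw [zero_pow (Nat.sub_ne_zero_of_lt (Finset.mem_range.mp hi)), mul_zero]

lemma map_aeval_homogenize {B : Type*} [CommSemiring B] [Algebra R B] (φ : A →ₐ[R] B)
    (p : R[X]) (n : ℕ) (a b : A) :
    φ (MvPolynomial.aeval ![a, b] (p.homogenize n)) =
      MvPolynomial.aeval ![φ a, φ b] (p.homogenize n) := by
  rw [MvPolynomial.comp_aeval_apply]
  congr 2
  funext i
  fin_cases i <;> rfl

lemma exists_mul_add_mul_aeval_homogenize_eq_pow {f g : R[X]} (hfg : IsCoprime f g) {d : ℕ}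
    (hf : f.natDegree ≤ d) (hg : g.natDegree ≤ d) (s t : A) :
    ∃ (x y : A) (N : ℕ), x * MvPolynomial.aeval ![s, t] (f.homogenize d) +
      y * MvPolynomial.aeval ![s, t] (g.homogenize d) = t ^ N := by
  obtain ⟨a, b, hab⟩ := hfg
  set m := max a.natDegree b.natDegree
  refine ⟨MvPolynomial.aeval ![s, t] (a.homogenize m),
    MvPolynomial.aeval ![s, t] (b.homogenize m), m + d, ?_⟩
  have := congrArg (fun p ↦ MvPolynomial.aeval ![s, t] (p.homogenize (m + d))) hab
  rwa [homogenize_add, homogenize_mul _ _ (le_max_left _ _) hf,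
    homogenize_mul _ _ (le_max_right _ _) hg, homogenize_one, map_add, map_mul, map_mul, map_pow,
    MvPolynomial.aeval_X] at this

lemma natDegree_aeval_homogenize_le {σ τ : R[X]} {e : ℕ} (hσ : σ.natDegree ≤ e)
    (hτ : τ.natDegree ≤ e) (p : R[X]) (n : ℕ) :
    (MvPolynomial.aeval ![σ, τ] (p.homogenize n)).natDegree ≤ n * e := by
  rw [aeval_homogenize_eq_sum]
  refine natDegree_sum_le_of_forall_le _ _ fun i hi ↦ ?_
  rw [mul_assoc, algebraMap_eq]
  refine (natDegree_C_mul_le _ _).trans ((natDegree_mul_le_of_le (natDegree_pow_le_of_le i hσ)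
    (natDegree_pow_le_of_le _ hτ)).trans ?_)
  rw [← add_mul, Nat.add_sub_cancel' (Nat.lt_succ_iff.mp (Finset.mem_range.mp hi))]

lemma coeff_aeval_homogenize {σ τ : R[X]} (hσ : σ.natDegree ≤ 1) (hτ : τ.natDegree ≤ 1)
    (p : R[X]) (n : ℕ) :
    (MvPolynomial.aeval ![σ, τ] (p.homogenize n)).coeff n =
      MvPolynomial.aeval ![σ.coeff 1, τ.coeff 1] (p.homogenize n) := by
  rw [aeval_homogenize_eq_sum, aeval_homogenize_eq_sum, finsetSum_coeff]
  refine Finset.sum_congr rfl fun i hi ↦ ?_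
  have hin : i * 1 + (n - i) * 1 = n := by
    have := Finset.mem_range.mp hi
    omega
  rw [mul_assoc, algebraMap_eq, coeff_C_mul, Algebra.algebraMap_self, RingHom.id_apply,
    mul_assoc, ← coeff_pow_of_natDegree_le hσ, ← coeff_pow_of_natDegree_le hτ,
    ← coeff_mul_add_eq_of_natDegree_le (natDegree_pow_le_of_le i hσ)
      (natDegree_pow_le_of_le _ hτ), hin]

lemma coeff_max_natDegree_ne_zero_or {f g : R[X]} (h : f ≠ 0 ∨ g ≠ 0) :
    f.coeff (max f.natDegree g.natDegree) ≠ 0 ∨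
      g.coeff (max f.natDegree g.natDegree) ≠ 0 := by
  wlog hgf : g.natDegree ≤ f.natDegree generalizing f g
  · rw [max_comm]
    exact (this h.symm (le_of_not_ge hgf)).symm
  rw [max_eq_left hgf]
  by_cases hf : f = 0
  · subst hf
    rw [natDegree_zero, Nat.le_zero] at hgf
    rw [natDegree_zero, ← hgf]
    exact Or.inr (leadingCoeff_ne_zero.mpr (h.resolve_left (not_not.mpr rfl)))
  · exact Or.inl (leadingCoeff_ne_zero.mpr hf)

end CommSemiring

section CommRing

variable {R A : Type*} [CommSemiring R] [CommRing A] [Algebra R A]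

lemma dvd_aeval_homogenize_sub (p : R[X]) (n : ℕ) (a b : A) :
    b ∣ MvPolynomial.aeval ![a, b] (p.homogenize n) - algebraMap R A (p.coeff n) * a ^ n := by
  rw [aeval_homogenize_eq_sum, Finset.sum_range_succ, Nat.sub_self, pow_zero, mul_one,
    add_sub_cancel_right]
  exact Finset.dvd_sum fun i hi ↦
    (dvd_pow_self b (Nat.sub_ne_zero_of_lt (Finset.mem_range.mp hi))).mul_left _

end CommRing

section Field

variable {K A : Type*} [Field K]

lemma isRelPrime_aeval_homogenize [CommRing A] [Algebra K A] [DecompositionMonoid A] {s t : A}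
    (hst : IsRelPrime s t) {f g : K[X]} (hfg : IsCoprime f g) {d : ℕ} (hf : f.natDegree ≤ d)
    (hg : g.natDegree ≤ d) (hlead : f.coeff d ≠ 0 ∨ g.coeff d ≠ 0) :
    IsRelPrime (MvPolynomial.aeval ![s, t] (f.homogenize d))
      (MvPolynomial.aeval ![s, t] (g.homogenize d)) := by
  intro w hwf hwg
  obtain ⟨x, y, N, hN⟩ := exists_mul_add_mul_aeval_homogenize_eq_pow hfg hf hg s t
  have hwt : IsRelPrime w t := by
    intro z hzw hzt
    have hlead_dvd : ∀ p : K[X], z ∣ MvPolynomial.aeval ![s, t] (p.homogenize d) →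
        z ∣ algebraMap K A (p.coeff d) * s ^ d := fun p hp ↦
      (dvd_sub_right hp).mp (hzt.trans (dvd_aeval_homogenize_sub p d s t))
    have hzs : z ∣ s ^ d := by
      rcases hlead with h | h
      · exact ((isUnit_iff_ne_zero.mpr h).map _).dvd_mul_left.mp (hlead_dvd f (hzw.trans hwf))
      · exact ((isUnit_iff_ne_zero.mpr h).map _).dvd_mul_left.mp (hlead_dvd g (hzw.trans hwg))
    exact hst.pow_left hzs hzt
  exact hwt.pow_right dvd_rfl (hN ▸ dvd_add (hwf.mul_left x) (hwg.mul_left y))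

lemma aeval_homogenize_ne_zero_or {f g : K[X]} (hfg : IsCoprime f g) {d : ℕ}
    (hf : f.natDegree ≤ d) (hg : g.natDegree ≤ d) (hlead : f.coeff d ≠ 0 ∨ g.coeff d ≠ 0)
    {a b : K} (hab : a ≠ 0 ∨ b ≠ 0) :
    MvPolynomial.aeval ![a, b] (f.homogenize d) ≠ 0 ∨
      MvPolynomial.aeval ![a, b] (g.homogenize d) ≠ 0 := by
  by_cases hb : b = 0
  · subst hb
    have ha : a ≠ 0 := hab.resolve_right (not_not.mpr rfl)
    simpa [aeval_homogenize_zero_right, ha] using hlead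
  · rw [MvPolynomial.aeval_eq_eval, eval_homogenize hf _ (by simpa),
      eval_homogenize hg _ (by simpa)]
    by_contra! h
    simp only [Matrix.cons_val_zero, Matrix.cons_val_one, mul_eq_zero, pow_eq_zero_iff', hb,
      false_and, or_false] at h
    obtain ⟨u, v, huv⟩ := hfg
    simpa [h.1, h.2] using congrArg (eval (a / b)) huv

lemma eq_one_of_max_natDegree_aeval_homogenize_eq_one {f g : K[X]} (hfg : IsCoprime f g)
    {d : ℕ} (hf : f.natDegree ≤ d) (hg : g.natDegree ≤ d)
    (hlead : f.coeff d ≠ 0 ∨ g.coeff d ≠ 0) {σ τ : K[X]} (hσ : σ.natDegree ≤ 1)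
    (hτ : τ.natDegree ≤ 1)
    (h : max (MvPolynomial.aeval ![σ, τ] (f.homogenize d)).natDegree
      (MvPolynomial.aeval ![σ, τ] (g.homogenize d)).natDegree = 1) :
    d = 1 := by
  set P := MvPolynomial.aeval ![σ, τ] (f.homogenize d)
  set Q := MvPolynomial.aeval ![σ, τ] (g.homogenize d)
  have h_le : max P.natDegree Q.natDegree ≤ d * 1 :=
    max_le (natDegree_aeval_homogenize_le hσ hτ f d) (natDegree_aeval_homogenize_le hσ hτ g d)
  have hlin : σ.coeff 1 ≠ 0 ∨ τ.coeff 1 ≠ 0 := by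
    by_contra! h0
    have hσ₀ := natDegree_le_pred hσ h0.1
    have hτ₀ := natDegree_le_pred hτ h0.2
    have h_const : max P.natDegree Q.natDegree ≤ d * 0 :=
      max_le (natDegree_aeval_homogenize_le hσ₀ hτ₀ f d)
        (natDegree_aeval_homogenize_le hσ₀ hτ₀ g d)
    omega
  have h_ge : d ≤ max P.natDegree Q.natDegree := by
    rcases aeval_homogenize_ne_zero_or hfg hf hg hlead hlin with h | h
    · exact le_max_of_le_left (le_natDegree_of_ne_zero (coeff_aeval_homogenize hσ hτ f d ▸ h))
    · exact le_max_of_le_right (le_natDegree_of_ne_zero (coeff_aeval_homogenize hσ hτ g d ▸ h))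
  omega

end Field

end Polynomial

lemma MvPolynomial.natDegree_aeval_le_degreeOf {σ R : Type*} [CommSemiring R]
    (p : MvPolynomial σ R) (x₀ : σ) {v : σ → R[X]} (hv : ∀ j ≠ x₀, (v j).natDegree = 0)
    (hx₀ : (v x₀).natDegree ≤ 1) :
    (aeval v p).natDegree ≤ p.degreeOf x₀ := by
  classical
  rw [aeval_eq_eval₂Hom, coe_eval₂Hom, eval₂_eq]
  refine natDegree_sum_le_of_forall_le _ _ fun m hm ↦ ?_
  have h_term : ∀ i ∈ m.support, (v i ^ m i).natDegree ≤ if i = x₀ then m i else 0 := by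
    intro i _
    refine natDegree_pow_le.trans ?_
    split_ifs with hi
    · exact hi ▸ (Nat.mul_le_mul_left _ hx₀).trans_eq (mul_one _)
    · rw [hv i hi, mul_zero]
  calc _ ≤ ∑ i ∈ m.support, (v i ^ m i).natDegree :=
        (natDegree_C_mul_le _ _).trans (natDegree_prod_le _ _)
    _ ≤ ∑ i ∈ m.support, if i = x₀ then m i else 0 := Finset.sum_le_sum h_term
    _ ≤ m x₀ := by rw [Finset.sum_ite_eq']; split_ifs <;> simp
    _ ≤ p.degreeOf x₀ := monomial_le_degreeOf x₀ hm

lemma associated_of_mul_eq_mul_of_isRelPrime {α : Type*} [CommMonoidWithZero α]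
    [IsLeftCancelMulZero α] [DecompositionMonoid α] {a b c d : α} (hab : IsRelPrime a b)
    (hcd : IsRelPrime c d) (h : a * d = b * c) : Associated a c :=
  associated_of_dvd_dvd (hab.dvd_of_dvd_mul_left ⟨d, h.symm⟩)
    (hcd.dvd_of_dvd_mul_right ⟨b, h.trans (mul_comm _ _)⟩)

open MvPolynomial

theorem deg_f_g_eq_one_general
    {F : Type*} [Field F] {k : ℕ}
    (s t u v : MvPolynomial (Fin k) F) (f g : Polynomial F)
    (hst : ∀ d : MvPolynomial (Fin k) F, d ∣ s → d ∣ t → IsUnit d)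
    (huv : ∀ d : MvPolynomial (Fin k) F, d ∣ u → d ∣ v → IsUnit d)
    (hfg : IsCoprime f g)
    (hds : ∀ x, MvPolynomial.degreeOf x s ≤ 1)
    (hdt : ∀ x, MvPolynomial.degreeOf x t ≤ 1)
    (heq : u * (∑ i ∈ Finset.range (max f.natDegree g.natDegree + 1),
          MvPolynomial.C (g.coeff i) * s ^ i * t ^ (max f.natDegree g.natDegree - i)) =
        v * (∑ i ∈ Finset.range (max f.natDegree g.natDegree + 1),
          MvPolynomial.C (f.coeff i) * s ^ i * t ^ (max f.natDegree g.natDegree - i)))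
    (hlin : ∃ (x₀ : Fin k) (a : Fin k → F) (c₀ c₁ c₂ : F), c₁ ≠ 0 ∧ c₂ ≠ 0 ∧
      ((MvPolynomial.eval₂ (Polynomial.C : F →+* Polynomial F)
            (fun j => if j = x₀ then Polynomial.X else Polynomial.C (a j)) u =
          Polynomial.C c₁ * Polynomial.X + Polynomial.C c₀ ∧
        MvPolynomial.eval₂ (Polynomial.C : F →+* Polynomial F)
            (fun j => if j = x₀ then Polynomial.X else Polynomial.C (a j)) v =
          Polynomial.C c₂) ∨
       (MvPolynomial.eval₂ (Polynomial.C : F →+* Polynomial F)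
            (fun j => if j = x₀ then Polynomial.X else Polynomial.C (a j)) u =
          Polynomial.C c₂ ∧
        MvPolynomial.eval₂ (Polynomial.C : F →+* Polynomial F)
            (fun j => if j = x₀ then Polynomial.X else Polynomial.C (a j)) v =
          Polynomial.C c₁ * Polynomial.X + Polynomial.C c₀))) :
    max f.natDegree g.natDegree = 1 := by
  obtain ⟨x₀, a, c₀, c₁, c₂, hc₁, -, hlin⟩ := hlin
  set d := max f.natDegree g.natDegree
  set φ : MvPolynomial (Fin k) F →ₐ[F] F[X] :=
    MvPolynomial.aeval fun j => if j = x₀ then X else Polynomial.C (a j)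
  change (φ u = _ ∧ φ v = _) ∨ (φ u = _ ∧ φ v = _) at hlin
  have hlead := coeff_max_natDegree_ne_zero_or hfg.ne_zero_or_ne_zero
  have heq' : u * MvPolynomial.aeval ![s, t] (g.homogenize d) =
      v * MvPolynomial.aeval ![s, t] (f.homogenize d) := by
    simpa only [← MvPolynomial.algebraMap_eq, ← aeval_homogenize_eq_sum] using heq
  have hFG := isRelPrime_aeval_homogenize hst hfg (le_max_left _ _) (le_max_right _ _) hlead
  have hu := associated_of_mul_eq_mul_of_isRelPrime huv hFG heq'
  have hv := associated_of_mul_eq_mul_of_isRelPrime (IsRelPrime.symm huv) hFG.symm heq'.symm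
  have hdeg : ∀ p : MvPolynomial (Fin k) F, (φ p).natDegree ≤ p.degreeOf x₀ := fun p ↦
    natDegree_aeval_le_degreeOf p x₀ (fun j hj ↦ by simp [hj]) (by simp)
  refine eq_one_of_max_natDegree_aeval_homogenize_eq_one hfg (le_max_left _ _)
    (le_max_right _ _) hlead ((hdeg s).trans (hds x₀)) ((hdeg t).trans (hdt x₀)) ?_
  rw [← map_aeval_homogenize, ← map_aeval_homogenize,
    ← natDegree_eq_of_degree_eq (degree_eq_degree_of_associated (hu.map φ)),
    ← natDegree_eq_of_degree_eq (degree_eq_degree_of_associated (hv.map φ))]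
  rcases hlin with ⟨hu', hv'⟩ | ⟨hu', hv'⟩ <;> simp [hu', hv', natDegree_linear hc₁]

/-- **degree-counting step.** Let `η = s/t` be a nonconstant rational
function and `p = u/v` a rational function in variables `x₁,…,xₖ` over `F`, with
`gcd(s,t) = 1`, `gcd(u,v) = 1`, every variable of degree at most `1` in `s, t` and at
most `2` in `u, v`. Suppose `p = f(η)/g(η)` for coprime nonzero `f, g ∈ F[z]`
(i.e. `u·g(s/t)·t^d = v·f(s/t)·t^d` with `d = max(deg f, deg g)`), and suppose there is a
variable `x₀` and an assignment of values to all other variables under which `(u, v)`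
becomes `(c₁x₀ + c₀, c₂)` or `(c₂, c₁x₀ + c₀)` with `c₁c₂ ≠ 0`. Then
`max(deg f, deg g) = 1`. -/
theorem deg_f_g_eq_one
    {F : Type*} [Field F] {k : ℕ}
    (s t u v : MvPolynomial (Fin k) F) (f g : Polynomial F)
    (hs0 : s ≠ 0) (ht0 : t ≠ 0) (hu0 : u ≠ 0) (hv0 : v ≠ 0)
    (hf0 : f ≠ 0) (hg0 : g ≠ 0)
    (hst : ∀ d : MvPolynomial (Fin k) F, d ∣ s → d ∣ t → IsUnit d)
    (huv : ∀ d : MvPolynomial (Fin k) F, d ∣ u → d ∣ v → IsUnit d)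
    (hfg : IsCoprime f g)
    (hds : ∀ x, MvPolynomial.degreeOf x s ≤ 1)
    (hdt : ∀ x, MvPolynomial.degreeOf x t ≤ 1)
    (hdu : ∀ x, MvPolynomial.degreeOf x u ≤ 2)
    (hdv : ∀ x, MvPolynomial.degreeOf x v ≤ 2)
    (hnonconst : ∀ c : F, s ≠ MvPolynomial.C c * t)
    (heq : u * (∑ i ∈ Finset.range (max f.natDegree g.natDegree + 1),
          MvPolynomial.C (g.coeff i) * s ^ i * t ^ (max f.natDegree g.natDegree - i)) =
        v * (∑ i ∈ Finset.range (max f.natDegree g.natDegree + 1),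
          MvPolynomial.C (f.coeff i) * s ^ i * t ^ (max f.natDegree g.natDegree - i)))
    (hlin : ∃ (x₀ : Fin k) (a : Fin k → F) (c₀ c₁ c₂ : F), c₁ ≠ 0 ∧ c₂ ≠ 0 ∧
      ((MvPolynomial.eval₂ (Polynomial.C : F →+* Polynomial F)
            (fun j => if j = x₀ then Polynomial.X else Polynomial.C (a j)) u =
          Polynomial.C c₁ * Polynomial.X + Polynomial.C c₀ ∧
        MvPolynomial.eval₂ (Polynomial.C : F →+* Polynomial F)
            (fun j => if j = x₀ then Polynomial.X else Polynomial.C (a j)) v =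
          Polynomial.C c₂) ∨
       (MvPolynomial.eval₂ (Polynomial.C : F →+* Polynomial F)
            (fun j => if j = x₀ then Polynomial.X else Polynomial.C (a j)) u =
          Polynomial.C c₂ ∧
        MvPolynomial.eval₂ (Polynomial.C : F →+* Polynomial F)
            (fun j => if j = x₀ then Polynomial.X else Polynomial.C (a j)) v =
          Polynomial.C c₁ * Polynomial.X + Polynomial.C c₀))) :
    max f.natDegree g.natDegree = 1 :=
  deg_f_g_eq_one_general s t u v f g hst huv hfg hds hdt heq hlin
end

section
/- Consider a 3-user interference alignment problem over a field K: diagonal N×N matrices M_{ji} (j, i ∈ {1,2,3}) with nonzero diagonal entries, N = 2n+1, and precoding matrices V₁ = (w, Tw, …, Tⁿw), V₂ = M₁₃M₂₃⁻¹(w, Tw, …, T^{n-1}w), V₃ = M₁₂M₃₂⁻¹(Tw, T²w, …, Tⁿw), where T = M₁₃M₂₁M₃₂M₁₂⁻¹M₂₃⁻¹M₃₁⁻¹ and w is the all-ones column vector of length 2n+1. Then these matrices satisfy the alignment conditions: span(M₂₁V₂) = span(M₃₁V₃), span(M₃₂V₃) ⊆ span(M₁₂V₁), and span(M₂₃V₂)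 ⊆ span(M₁₃V₁). -/
/-!
Diagonal matrices commute, so every matrix in sight is a diagonal matrix, and the definition of
`T` rearranges to `M₂₁M₁₃M₂₃⁻¹ = M₃₁M₁₂M₃₂⁻¹T`. Hence the `c`-th column of `M₂₁V₂` equals the
`c`-th column of `M₃₁V₃`, the `c`-th column of `M₃₂V₃` is the `(c+1)`-st column of `M₁₂V₁`, and
the `c`-th column of `M₂₃V₂` is the `c`-th column of `M₁₃V₁`.
-/

open Matrix

/-- The column span of a matrix: the `K`-linear span of its columns. -/
def colSpan {K : Type*} [Field K] {N m : ℕ}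
    (A : Matrix (Fin N) (Fin m) K) : Submodule K (Fin N → K) :=
  Submodule.span K (Set.range Aᵀ)

theorem colSpan_submatrix_le {K : Type*} [Field K] {N m k : ℕ}
    (A : Matrix (Fin N) (Fin m) K) (f : Fin k → Fin m) :
    colSpan (A.submatrix id f) ≤ colSpan A :=
  Submodule.span_mono (Set.range_comp_subset_range f Aᵀ)

namespace Matrix

theorem mul_of_mulVec {α ι l m n : Type*} [NonUnitalSemiring α] [Fintype m] [Fintype n]
    (A : Matrix l m α) (B : ι → Matrix m n α) (w : n → α) :
    A * of (fun r c => (B c *ᵥ w) r) = of fun r c => ((A * B c) *ᵥ w) r := by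
  ext r c
  simp only [mul_apply, of_apply, mulVec, dotProduct, Finset.mul_sum, Finset.sum_mul, mul_assoc]
  exact Finset.sum_comm

variable {K n : Type*} [Field K] [Fintype n] [DecidableEq n]

theorem inv_diagonal_of_ne_zero {d : n → K} (hd : ∀ i, d i ≠ 0) :
    (diagonal d)⁻¹ = diagonal d⁻¹ := by
  refine inv_eq_right_inv ?_
  rw [diagonal_mul_diagonal, ← diagonal_one]
  exact congrArg diagonal (funext fun i => mul_inv_cancel₀ (hd i))

theorem diagonal_mul_diagonal_mul_inv_diagonal_mul {d e : n → K} (hd : ∀ i, d i ≠ 0)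
    (X : Matrix n n K) :
    diagonal d * (diagonal e * (diagonal d)⁻¹ * X) = diagonal e * X := by
  rw [inv_diagonal_of_ne_zero hd, ← mul_assoc, ← mul_assoc, diagonal_mul_diagonal,
    diagonal_mul_diagonal]
  congr 2
  funext i
  simp only [Pi.inv_apply]
  field_simp [hd i]

end Matrix

theorem diagonal_precoders_align {K n : Type*} [Field K] [Fintype n] [DecidableEq n]
    (d : Fin 3 → Fin 3 → n → K) (hd : ∀ j i a, d j i a ≠ 0) (T : Matrix n n K)
    (hT : T = diagonal (d 0 2) * diagonal (d 1 0) * diagonal (d 2 1) * (diagonal (d 0 1))⁻¹ *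
      (diagonal (d 1 2))⁻¹ * (diagonal (d 2 0))⁻¹) (c : ℕ) :
    diagonal (d 1 0) * (diagonal (d 0 2) * (diagonal (d 1 2))⁻¹ * T ^ c) =
      diagonal (d 2 0) * (diagonal (d 0 1) * (diagonal (d 2 1))⁻¹ * T ^ (c + 1)) := by
  simp only [hT, inv_diagonal_of_ne_zero (hd _ _), diagonal_pow, diagonal_mul_diagonal, pow_succ]
  congr 1
  funext a
  simp only [Pi.inv_apply]
  -- `T ^ c` is a common factor, and `field_simp` cannot clear the inverses inside it
  generalize (_ : n → K) ^ c = x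
  field_simp [hd 0 1 a, hd 1 2 a, hd 2 0 a, hd 2 1 a]

/-- **Cadambe–Jafar precoding matrices satisfy the alignment conditions.**
Let `M j i` (for `j, i ∈ {0,1,2}`, with `M j i` playing the role of `M_{(j+1)(i+1)}`) be
diagonal `(2n+1)×(2n+1)` matrices over a field `K` with nonzero diagonal entries. With
`T = M₁₃M₂₁M₃₂M₁₂⁻¹M₂₃⁻¹M₃₁⁻¹`, `w` the all-ones vector, and precoding matrices
`V₁ = (w, Tw, …, Tⁿw)`, `V₂ = M₁₃M₂₃⁻¹(w, …, T^{n-1}w)`, `V₃ = M₁₂M₃₂⁻¹(Tw, …, Tⁿw)`: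
`span(M₂₁V₂) = span(M₃₁V₃)`, `span(M₃₂V₃) ⊆ span(M₁₂V₁)` and
`span(M₂₃V₂) ⊆ span(M₁₃V₁)`. -/
theorem alignment_conditions_hold
    {K : Type*} [Field K] (n : ℕ)
    (M : Fin 3 → Fin 3 → Matrix (Fin (2 * n + 1)) (Fin (2 * n + 1)) K)
    (hdiag : ∀ j i, (M j i).IsDiag)
    (hnz : ∀ j i a, M j i a a ≠ 0) :
    let T : Matrix (Fin (2 * n + 1)) (Fin (2 * n + 1)) K :=
      M 0 2 * M 1 0 * M 2 1 * (M 0 1)⁻¹ * (M 1 2)⁻¹ * (M 2 0)⁻¹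
    let w : Fin (2 * n + 1) → K := fun _ => 1
    let V₁ : Matrix (Fin (2 * n + 1)) (Fin (n + 1)) K :=
      Matrix.of fun r c => (T ^ (c : ℕ)).mulVec w r
    let V₂ : Matrix (Fin (2 * n + 1)) (Fin n) K :=
      Matrix.of fun r c => (M 0 2 * (M 1 2)⁻¹ * T ^ (c : ℕ)).mulVec w r
    let V₃ : Matrix (Fin (2 * n + 1)) (Fin n) K :=
      Matrix.of fun r c => (M 0 1 * (M 2 1)⁻¹ * T ^ ((c : ℕ) + 1)).mulVec w r
    colSpan (M 1 0 * V₂) = colSpan (M 2 0 * V₃) ∧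
      colSpan (M 2 1 * V₃) ≤ colSpan (M 0 1 * V₁) ∧
      colSpan (M 1 2 * V₂) ≤ colSpan (M 0 2 * V₁) := by
  obtain ⟨d, rfl⟩ : ∃ d : Fin 3 → Fin 3 → Fin (2 * n + 1) → K,
      M = fun j i => diagonal (d j i) :=
    ⟨fun j i => (M j i).diag, funext₂ fun j i => (hdiag j i).diagonal_diag.symm⟩
  simp only [diagonal_apply_eq] at hnz
  intro T w V₁ V₂ V₃
  refine ⟨congrArg colSpan ?_, ?_, ?_⟩
  · simp only [V₂, V₃, mul_of_mulVec, diagonal_precoders_align d hnz T rfl]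
  · have hV₃ : diagonal (d 2 1) * V₃ = (diagonal (d 0 1) * V₁).submatrix id Fin.succ := by
      simp only [V₁, V₃, mul_of_mulVec, diagonal_mul_diagonal_mul_inv_diagonal_mul (hnz 2 1)]
      rfl
    exact hV₃ ▸ colSpan_submatrix_le _ _
  · have hV₂ : diagonal (d 1 2) * V₂ = (diagonal (d 0 2) * V₁).submatrix id Fin.castSucc := by
      simp only [V₁, V₂, mul_of_mulVec, diagonal_mul_diagonal_mul_inv_diagonal_mul (hnz 1 2)]
      rfl
    exact hV₂ ▸ colSpan_submatrix_le _ _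
end
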